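/- arXiv:2309.01785 — 9 statements merged into one kernel-verified Lean document; each statement's English description precedes it below -/
import Mathlib

section
/- Let F be a field of characteristic not 2, V a finite-dimensional F-vector space with a symplectic form s, u ∈ Sp(s), and W a totally s-singular subspace of V with u(W) = W. Let p be the characteristic polynomial of the restriction of u to W (one has p(0) ≠ 0 since u is invertible), and let p♯ = p(0)⁻¹·X^{deg p}·p(1/X) be its reciprocal polynomial. Let W⊥ = {x ∈ V : s(x, w) = 0 for all w ∈ W}; then W ⊆ W⊥, u(W⊥) = W⊥, s induces a symplectic form s̄ on the quotient W⊥/W and u induces a symplectic transformation ū of (W⊥/W, s̄). Assume that the characteristic polynomial of ū is coprime with p·p♯. Then there exist u-stable subspaces V₀ and V₁ of V with V = V₀ ⊕ V₁, s(x, y) = 0 for all x ∈ V₀ and y ∈ V₁, W ⊆ V₀ with dim V₀ = 2·dim W (so W is a Lagrangian of V₀), and there is a linear isomorphism φ : V₁ → W⊥/W satisfying s̄(φ x, φ y) = s(x, y) and φ(u x) = ū(φ x) for all x, y ∈ V₁. -/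
open Polynomial

section helpers

variable {F : Type*} [Field F] {M : Type*} [AddCommGroup M] [Module F M]
  {N : Type*} [AddCommGroup N] [Module F N]

lemma pow_intertwine (T : Module.End F M) (S : Module.End F N) (ℓ : M →ₗ[F] N)
    (h : ∀ x, ℓ (T x) = S (ℓ x)) (n : ℕ) (x : M) : ℓ ((T ^ n) x) = (S ^ n) (ℓ x) := by
  induction n with
  | zero => simp
  | succ k ih =>
    rw [pow_succ', pow_succ', Module.End.mul_apply, Module.End.mul_apply, h, ih]

lemma aeval_intertwine (T : Module.End F M) (S : Module.End F N) (ℓ : M →ₗ[F] N)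
    (h : ∀ x, ℓ (T x) = S (ℓ x)) (f : Polynomial F) (x : M) :
    ℓ ((aeval T f) x) = (aeval S f) (ℓ x) := by
  rw [aeval_eq_sum_range (p := f) T, aeval_eq_sum_range (p := f) S]
  simp only [LinearMap.sum_apply, LinearMap.smul_apply, map_sum, map_smul]
  exact Finset.sum_congr rfl fun i _ => by rw [pow_intertwine T S ℓ h]

lemma aeval_adjoint (s : M →ₗ[F] M →ₗ[F] F) (e e' : Module.End F M)
    (h : ∀ x y, s (e x) y = s x (e' y)) (f : Polynomial F) (x y : M) :
    s ((aeval e f) x) y = s x ((aeval e' f) y) := by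
  have hp : ∀ (n : ℕ) (x y : M), s ((e ^ n) x) y = s x ((e' ^ n) y) := by
    intro n
    induction n with
    | zero => simp
    | succ k ih =>
      intro x y
      rw [pow_succ, pow_succ', Module.End.mul_apply, Module.End.mul_apply, ih, h]
  rw [aeval_eq_sum_range (p := f) e, aeval_eq_sum_range (p := f) e']
  simp only [LinearMap.sum_apply, LinearMap.smul_apply, map_sum, map_smul,
    LinearMap.smul_apply]
  exact Finset.sum_congr rfl fun i _ => by rw [hp]

lemma aeval_reflect_inv (e e' : Module.End F M) (h1 : ∀ x, e (e' x) = x)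
    (h2 : ∀ x, e' (e x) = x) (f : Polynomial F) (n : ℕ) (hn : f.natDegree ≤ n) (x : M) :
    (aeval e (reflect n f)) x = (e ^ n) ((aeval e' f) x) := by
  have hinv : ∀ (i : ℕ) (x : M), (e ^ i) ((e' ^ i) x) = x := by
    intro i
    induction i with
    | zero => simp
    | succ k ih =>
      intro x
      rw [pow_succ, pow_succ', Module.End.mul_apply, Module.End.mul_apply, h1, ih]
  have hcanc : ∀ i ≤ n, ∀ x : M, (e ^ n) ((e' ^ i) x) = (e ^ (n - i)) x := by
    intro i hi x
    have : e ^ n = e ^ (n - i) * e ^ i := by rw [← pow_add, Nat.sub_add_cancel hi]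
    rw [this, Module.End.mul_apply, hinv]
  have hdeg : (reflect n f).natDegree < n + 1 := by
    rw [Nat.lt_succ_iff, natDegree_le_iff_coeff_eq_zero]
    intro m hm
    rw [coeff_reflect, revAt_eq_self_of_lt hm]
    exact coeff_eq_zero_of_natDegree_lt (lt_of_le_of_lt hn hm)
  rw [aeval_eq_sum_range' hdeg, aeval_eq_sum_range' (Nat.lt_succ_of_le hn)]
  simp only [LinearMap.sum_apply, LinearMap.smul_apply, map_sum, map_smul, coeff_reflect]
  rw [← Finset.sum_range_reflect]
  refine Finset.sum_congr rfl fun j hj => ?_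
  rw [Finset.mem_range, Nat.lt_succ_iff] at hj
  rw [Nat.add_sub_cancel, revAt_le (Nat.sub_le_of_le_add (by omega)), hcanc j hj,
    Nat.sub_sub_self hj]

lemma reverse_reverse_of_coeff_zero_ne (f : Polynomial F) (h : f.coeff 0 ≠ 0) :
    f.reverse.reverse = f := by
  have ht : f.natTrailingDegree = 0 := natTrailingDegree_eq_zero.mpr (Or.inr h)
  have hd : f.reverse.natDegree = f.natDegree := by rw [reverse_natDegree, ht, Nat.sub_zero]
  show reflect f.reverse.natDegree f.reverse = f
  rw [hd]
  show reflect f.natDegree (reflect f.natDegree f) = f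
  ext i
  rw [coeff_reflect, coeff_reflect, revAt_invol]

end helpers

set_option maxHeartbeats 1000000 in
/-- The splitting lemma. Let `(V, s)` be a finite-dimensional symplectic space over a
field `F` of characteristic not 2, `u ∈ Sp(s)`, and `W` a totally `s`-singular subspace
with `u(W) = W`. Let `p` be the characteristic polynomial of the restriction of `u` to
`W`, and `p♯ = p(0)⁻¹·Xᵈ·p(1/X)` its reciprocal polynomial. The form `s` induces a
symplectic form `s̄` on `W^⊥/W` and `u` induces `ū ∈ Sp(s̄)`. If the characteristic
polynomial of `ū` is coprime with `p·p♯`, then `V` splits as an `s`-orthogonal direct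
sum of `u`-stable subspaces `V₀ ⊕ V₁` with `W ⊆ V₀`, `dim V₀ = 2·dim W` (so `W` is a
Lagrangian of `V₀`), and `(V₁, s, u)` isometric to `(W^⊥/W, s̄, ū)`. -/
theorem symplectic_splitting_lemma
    (F : Type*) [Field F] (hF : ringChar F ≠ 2)
    (V : Type*) [AddCommGroup V] [Module F V] [FiniteDimensional F V]
    (s : V →ₗ[F] V →ₗ[F] F)
    (halt : ∀ x, s x x = 0)
    (hnd : ∀ x, (∀ y, s x y = 0) → x = 0)
    (u : V ≃ₗ[F] V)
    (hu : ∀ x y, s (u x) (u y) = s x y)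
    (W : Submodule F V)
    (hWsing : ∀ x ∈ W, ∀ y ∈ W, s x y = 0)
    (hWstab : W.map (u : V →ₗ[F] V) = W)
    (hWstab' : ∀ x ∈ W, u x ∈ W)
    (p : Polynomial F)
    (hp : p = LinearMap.charpoly ((u : V →ₗ[F] V).restrict hWstab'))
    (Wperp : Submodule F V)
    (hWperp : ∀ x, x ∈ Wperp ↔ ∀ w ∈ W, s x w = 0)
    (hWle : W ≤ Wperp)
    (hperpstab : ∀ x ∈ Wperp, u x ∈ Wperp)
    (sbar : (Wperp ⧸ W.comap Wperp.subtype) →ₗ[F]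
      (Wperp ⧸ W.comap Wperp.subtype) →ₗ[F] F)
    (hsbar : ∀ x y : Wperp,
      sbar (Submodule.Quotient.mk x) (Submodule.Quotient.mk y) = s x y)
    (ubar : (Wperp ⧸ W.comap Wperp.subtype) ≃ₗ[F] (Wperp ⧸ W.comap Wperp.subtype))
    (hubar : ∀ x : Wperp, ubar (Submodule.Quotient.mk x) =
      Submodule.Quotient.mk (⟨u x, hperpstab x x.2⟩ : Wperp))
    (hcoprime : IsCoprime (LinearMap.charpoly ubar.toLinearMap)
      (p * (C (p.coeff 0)⁻¹ * p.reverse))) :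
    ∃ V₀ V₁ : Submodule F V, ∃ (_ : ∀ x ∈ V₀, u x ∈ V₀) (h₁ : ∀ x ∈ V₁, u x ∈ V₁),
      V₀ ⊔ V₁ = ⊤ ∧ V₀ ⊓ V₁ = ⊥ ∧
      (∀ x ∈ V₀, ∀ y ∈ V₁, s x y = 0) ∧
      W ≤ V₀ ∧ Module.finrank F V₀ = 2 * Module.finrank F W ∧
      ∃ φ : V₁ ≃ₗ[F] (Wperp ⧸ W.comap Wperp.subtype),
        (∀ x y : V₁, sbar (φ x) (φ y) = s x y) ∧
        (∀ x : V₁, φ ⟨u x, h₁ x x.2⟩ = ubar (φ x)) := by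
  classical
  set e : Module.End F V := (u : V →ₗ[F] V) with he
  set e' : Module.End F V := (u.symm : V →ₗ[F] V) with he'
  have hee' : ∀ x, e (e' x) = x := fun x => u.apply_symm_apply x
  have he'e : ∀ x, e' (e x) = x := fun x => u.symm_apply_apply x
  have hadj : ∀ x y, s (e x) y = s x (e' y) := by
    intro x y
    conv_lhs => rw [← u.apply_symm_apply y]
    exact hu x (u.symm y)
  have hadj' : ∀ x y, s (e' x) y = s x (e y) := by
    intro x y
    have h := (hu (u.symm x) y).symm
    rwa [u.apply_symm_apply] at h
  -- Cayley-Hamilton on W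
  set TW : Module.End F W := (u : V →ₗ[F] V).restrict hWstab' with hTW
  have hCHW : aeval TW p = 0 := by rw [hp]; exact LinearMap.aeval_self_charpoly _
  have hWint : ∀ (f : Polynomial F) (x : W),
      ((aeval TW f) x : V) = (aeval e f) (x : V) := by
    intro f x
    exact aeval_intertwine TW e W.subtype (fun y => rfl) f x
  have hpW : ∀ w ∈ W, (aeval e p) w = 0 := by
    intro w hw
    have h := hWint p ⟨w, hw⟩
    rw [hCHW] at h
    simpa using h.symm
  -- Cayley-Hamilton on the quotient
  set π : Wperp →ₗ[F] (Wperp ⧸ W.comap Wperp.subtype) := (W.comap Wperp.subtype).mkQ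
    with hπdef
  set TP : Module.End F Wperp := (u : V →ₗ[F] V).restrict hperpstab with hTP
  have hPint : ∀ (f : Polynomial F) (x : Wperp),
      ((aeval TP f) x : V) = (aeval e f) (x : V) := by
    intro f x
    exact aeval_intertwine TP e Wperp.subtype (fun y => rfl) f x
  have hπ : ∀ x : Wperp, π (TP x) = ubar.toLinearMap (π x) := by
    intro x
    show Submodule.Quotient.mk (TP x) = ubar (Submodule.Quotient.mk x)
    rw [hubar x]
    rfl
  have hπint : ∀ (f : Polynomial F) (x : Wperp),
      π ((aeval TP f) x) = (aeval ubar.toLinearMap f) (π x) :=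
    fun f x => aeval_intertwine TP ubar.toLinearMap π hπ f x
  set q : Polynomial F := LinearMap.charpoly ubar.toLinearMap with hq
  have hCHq : aeval ubar.toLinearMap q = 0 := LinearMap.aeval_self_charpoly _
  have hqWperp : ∀ (x : V) (hx : x ∈ Wperp), (aeval e q) x ∈ W := by
    intro x hx
    have h2 := hπint q ⟨x, hx⟩
    rw [hCHq] at h2
    have h3 : (aeval TP q) ⟨x, hx⟩  ∈ W.comap Wperp.subtype := by
      rw [← Submodule.Quotient.mk_eq_zero]
      exact h2
    have h4 : ((aeval TP q) ⟨x, hx⟩ : V) ∈ W := h3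
    rwa [hPint q ⟨x, hx⟩] at h4
  -- p has nonzero constant coefficient
  have hp0 : p.coeff 0 ≠ 0 := by
    have hinj : Function.Injective TW := by
      intro a b hab
      have : (TW a : V) = (TW b : V) := by rw [hab]
      have h2 : u (a : V) = u (b : V) := this
      exact Subtype.ext (u.injective h2)
    have hsurj : Function.Surjective TW :=
      (LinearMap.injective_iff_surjective).mp hinj
    have hdet : IsUnit (LinearMap.det TW) := by
      have := (LinearEquiv.ofBijective TW ⟨hinj, hsurj⟩).isUnit_det'
      convert this using 2
      ext x; rfl
    intro h0
    rw [LinearMap.det_eq_sign_charpoly_coeff, ← hp, h0, mul_zero] at hdet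
    exact hdet.ne_zero rfl
  set c : F := (p.coeff 0)⁻¹ with hc
  set r : Polynomial F := C c * p.reverse with hr
  set P : Polynomial F := p * r with hP
  set m : Polynomial F := P * q with hm'
  have hmon : p.Monic := by rw [hp]; exact LinearMap.charpoly_monic _
  have hrevp : p.reverse = reflect p.natDegree p := rfl
  -- r(e) maps everything into Wperp
  have hrW : ∀ x : V, (aeval e r) x ∈ Wperp := by
    intro x
    rw [hWperp]
    intro w hw
    rw [aeval_adjoint s e e' hadj r x w]
    have h1 : (aeval e' r) w = c • (aeval e' p.reverse) w := by
      rw [hr, map_mul, aeval_C, Module.End.mul_apply]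
      simp [Algebra.algebraMap_eq_smul_one]
    have h2 : (aeval e' p.reverse) w = (e' ^ p.natDegree) ((aeval e p) w) := by
      rw [hrevp]
      exact aeval_reflect_inv e' e he'e hee' p p.natDegree le_rfl w
    rw [h1, h2, hpW w hw]
    simp
  have hPW : ∀ w ∈ W, (aeval e P) w = 0 := by
    intro w hw
    have : P = r * p := mul_comm p r
    rw [this, map_mul, Module.End.mul_apply, hpW w hw, map_zero]
  have hmzero : ∀ x : V, (aeval e m) x = 0 := by
    intro x
    have hrw : m = p * (q * r) := by rw [hm', hP]; ring
    rw [hrw, map_mul, map_mul, Module.End.mul_apply, Module.End.mul_apply]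
    exact hpW _ (hqWperp _ (hrW x))
  obtain ⟨a, b, hab⟩ := hcoprime
  set V₀ : Submodule F V := LinearMap.ker (aeval e P) with hV₀
  set V₁ : Submodule F V := LinearMap.ker (aeval e q) with hV₁
  have hdecomp : ∀ x : V, (aeval e (a * q)) x ∈ V₀ ∧ (aeval e (b * P)) x ∈ V₁ ∧
      x = (aeval e (a * q)) x + (aeval e (b * P)) x := by
    intro x
    refine ⟨?_, ?_, ?_⟩
    · show (aeval e P) ((aeval e (a * q)) x) = 0
      rw [← Module.End.mul_apply, ← map_mul]
      have h : P * (a * q) = a * m := by rw [hm']; ring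
      rw [h, map_mul, Module.End.mul_apply, hmzero, map_zero]
    · show (aeval e q) ((aeval e (b * P)) x) = 0
      rw [← Module.End.mul_apply, ← map_mul]
      have h : q * (b * P) = b * m := by rw [hm']; ring
      rw [h, map_mul, Module.End.mul_apply, hmzero, map_zero]
    · have h1 : a * q + b * P = 1 := hab
      have h2 : (aeval e (a * q + b * P)) x = x := by rw [h1]; simp
      conv_lhs => rw [← h2]
      rw [map_add, LinearMap.add_apply]
  have hsup : V₀ ⊔ V₁ = ⊤ := by
    rw [eq_top_iff]
    intro x _
    obtain ⟨h1, h2, h3⟩ := hdecomp x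
    exact Submodule.mem_sup.mpr ⟨_, h1, _, h2, h3.symm⟩
  have hinf : V₀ ⊓ V₁ = ⊥ := by
    rw [eq_bot_iff]
    intro x hx
    obtain ⟨hx0, hx1⟩ := hx
    obtain ⟨_, _, h3⟩ := hdecomp x
    have hz1 : (aeval e (a * q)) x = 0 := by
      rw [map_mul, Module.End.mul_apply, (by exact hx1 : (aeval e q) x = 0), map_zero]
    have hz2 : (aeval e (b * P)) x = 0 := by
      rw [map_mul, Module.End.mul_apply, (by exact hx0 : (aeval e P) x = 0), map_zero]
    rw [hz1, hz2, add_zero] at h3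
    simpa using h3
  have hcomm : ∀ (f : Polynomial F) (x : V), (aeval e f) (e x) = e ((aeval e f) x) := by
    intro f x
    have h2 : (aeval e f) (e x) = (aeval e (f * X)) x := by
      rw [map_mul, Module.End.mul_apply, aeval_X]
    have h3 : e ((aeval e f) x) = (aeval e (X * f)) x := by
      rw [map_mul, Module.End.mul_apply, aeval_X]
    rw [h2, h3, mul_comm]
  have h₀ : ∀ x ∈ V₀, u x ∈ V₀ := by
    intro x hx
    show (aeval e P) (u x) = 0
    have hx' : (aeval e P) x = 0 := hx
    have := hcomm P x
    rw [hx', map_zero] at this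
    exact this
  have h₁ : ∀ x ∈ V₁, u x ∈ V₁ := by
    intro x hx
    show (aeval e q) (u x) = 0
    have hx' : (aeval e q) x = 0 := hx
    have := hcomm q x
    rw [hx', map_zero] at this
    exact this
  -- P is self-reciprocal
  have hNrev : P.reverse = P := by
    have step1 : P.reverse = p.reverse * (C c * p.reverse.reverse) := by
      rw [hP, hr, reverse_mul_of_domain, reverse_mul_of_domain, reverse_C]
    rw [step1, reverse_reverse_of_coeff_zero_ne p hp0, hP, hr]
    ring
  have hreflP : reflect P.natDegree P = P := hNrev
  have hPrefl : ∀ x : V, (aeval e' P) x = (e' ^ P.natDegree) ((aeval e P) x) := by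
    intro x
    conv_lhs => rw [← hreflP]
    exact aeval_reflect_inv e' e he'e hee' P P.natDegree le_rfl x
  have horth : ∀ x ∈ V₀, ∀ y ∈ V₁, s x y = 0 := by
    intro x hx y hy
    obtain ⟨_, _, h3⟩ := hdecomp y
    have hz : (aeval e (a * q)) y = 0 := by
      rw [map_mul, Module.End.mul_apply, (by exact hy : (aeval e q) y = 0), map_zero]
    have hy' : y = (aeval e P) ((aeval e b) y) := by
      conv_lhs => rw [h3]
      rw [hz, zero_add, mul_comm b P, map_mul, Module.End.mul_apply]
    calc s x y = s x ((aeval e P) ((aeval e b) y)) := by conv_lhs => rw [hy']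
    _ = s ((aeval e' P) x) ((aeval e b) y) := (aeval_adjoint s e' e hadj' P x _).symm
    _ = 0 := by
        rw [hPrefl x, (by exact hx : (aeval e P) x = 0), map_zero, map_zero,
          LinearMap.zero_apply]
  have hWV₀ : W ≤ V₀ := fun w hw => hPW w hw
  have hV₁perp : V₁ ≤ Wperp := by
    intro y hy
    rw [hWperp]
    intro w hw
    obtain ⟨_, _, h3⟩ := hdecomp y
    have hz : (aeval e (a * q)) y = 0 := by
      rw [map_mul, Module.End.mul_apply, (by exact hy : (aeval e q) y = 0), map_zero]
    have hy' : y = (aeval e P) ((aeval e b) y) := by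
      conv_lhs => rw [h3]
      rw [hz, zero_add, mul_comm b P, map_mul, Module.End.mul_apply]
    calc s y w = s ((aeval e P) ((aeval e b) y)) w := by conv_lhs => rw [hy']
    _ = s ((aeval e b) y) ((aeval e' P) w) := aeval_adjoint s e e' hadj P _ w
    _ = 0 := by
        rw [hPrefl w, hPW w hw, map_zero, map_zero]
  -- the isometry φ
  set φ₀ : V₁ →ₗ[F] (Wperp ⧸ W.comap Wperp.subtype) := π.comp (Submodule.inclusion hV₁perp) with hφ₀
  have hφ₀app : ∀ x : V₁, φ₀ x = Submodule.Quotient.mk (⟨(x : V), hV₁perp x.2⟩ : Wperp) := by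
    intro x
    rfl
  have hφinj : Function.Injective φ₀ := by
    intro x y hxy
    have h1 : ((x : V) - (y : V)) ∈ W := by
      have h2 : φ₀ (x - y) = 0 := by rw [map_sub, hxy, sub_self]
      rw [hφ₀app] at h2
      have h3 : (⟨((x - y : V₁) : V), hV₁perp (x - y).2⟩ : Wperp)  ∈ W.comap Wperp.subtype :=
        (Submodule.Quotient.mk_eq_zero _).mp h2
      exact h3
    have h4 : ((x : V) - (y : V)) ∈ V₀ ⊓ V₁ :=
      ⟨hWV₀ h1, sub_mem x.2 y.2⟩
    rw [hinf] at h4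
    exact Subtype.ext (sub_eq_zero.mp h4)
  have hφsurj : Function.Surjective φ₀ := by
    intro zq
    obtain ⟨z, rfl⟩ := (W.comap Wperp.subtype).mkQ_surjective zq
    obtain ⟨hz0, hz1, hz3⟩ := hdecomp (z : V)
    have hx₀p : (aeval e (a * q)) (z : V) ∈ Wperp := by
      rw [← hPint (a * q) z]
      exact ((aeval TP (a * q)) z).2
    have hx₁p : (aeval e (b * P)) (z : V) ∈ Wperp := by
      rw [← hPint (b * P) z]
      exact ((aeval TP (b * P)) z).2
    set x₀ : V := (aeval e (a * q)) (z : V)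
    set x₁ : V := (aeval e (b * P)) (z : V)
    have hx₀W : x₀ ∈ W := by
      have hq0 : (aeval ubar.toLinearMap q) (π ⟨x₀, hx₀p⟩) = 0 := by
        rw [hCHq]; rfl
      have hTP0 : (aeval TP P) ⟨x₀, hx₀p⟩ = 0 := by
        apply Subtype.ext
        rw [hPint P ⟨x₀, hx₀p⟩]
        exact hz0
      have hP0 : (aeval ubar.toLinearMap P) (π ⟨x₀, hx₀p⟩) = 0 := by
        rw [← hπint P ⟨x₀, hx₀p⟩, hTP0, map_zero]
      have h1 : π ⟨x₀, hx₀p⟩ = (aeval ubar.toLinearMap (a * q + b * P)) (π ⟨x₀, hx₀p⟩) := by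
        rw [hab]; simp
      rw [map_add, LinearMap.add_apply, map_mul, map_mul, Module.End.mul_apply,
        Module.End.mul_apply, hq0, hP0, map_zero, map_zero, add_zero] at h1
      have h2 : (⟨x₀, hx₀p⟩ : Wperp)  ∈ W.comap Wperp.subtype := by
        rw [← Submodule.Quotient.mk_eq_zero]
        exact h1
      exact h2
    refine ⟨⟨x₁, hz1⟩, ?_⟩
    rw [hφ₀app]
    have hzsum : z = (⟨x₀, hx₀p⟩ : Wperp) + ⟨x₁, hx₁p⟩ := Subtype.ext hz3
    show Submodule.Quotient.mk _ = π z
    rw [hzsum, map_add]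
    have hz0' : π (⟨x₀, hx₀p⟩ : Wperp) = 0 := (Submodule.Quotient.mk_eq_zero _).mpr hx₀W
    rw [hz0', zero_add]
    rfl
  set φ : V₁ ≃ₗ[F] (Wperp ⧸ W.comap Wperp.subtype) := LinearEquiv.ofBijective φ₀ ⟨hφinj, hφsurj⟩ with hφ
  have hφapp : ∀ x : V₁, φ x = Submodule.Quotient.mk (⟨(x : V), hV₁perp x.2⟩ : Wperp) :=
    fun x => hφ₀app x
  -- dimension count
  have hr1 : Module.finrank F V₀ + Module.finrank F V₁ = Module.finrank F V := by
    have h := Submodule.finrank_sup_add_finrank_inf_eq V₀ V₁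
    rw [hsup, hinf] at h
    simpa [finrank_top] using h.symm
  have hr2 : Module.finrank F V₁ = Module.finrank F (Wperp ⧸ W.comap Wperp.subtype) := φ.finrank_eq
  have hr3 : Module.finrank F (Wperp ⧸ W.comap Wperp.subtype) + Module.finrank F (W.comap Wperp.subtype) = Module.finrank F Wperp :=
    Submodule.finrank_quotient_add_finrank (W.comap Wperp.subtype)
  have hr4 : Module.finrank F (W.comap Wperp.subtype) = Module.finrank F W :=
    (Submodule.comapSubtypeEquivOfLe hWle).finrank_eq
  have hr5 : Module.finrank F Wperp + Module.finrank F W = Module.finrank F V := by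
    set L : V →ₗ[F] (W →ₗ[F] F) := LinearMap.domRestrict₂ s W with hL
    have hker : LinearMap.ker L = Wperp := by
      ext x
      rw [LinearMap.mem_ker, hWperp]
      constructor
      · intro h w hw
        exact LinearMap.ext_iff.mp h ⟨w, hw⟩
      · intro h
        ext w
        exact h w w.2
    have hsurjL : Function.Surjective L := by
      have hsinj : Function.Injective (s : V →ₗ[F] Module.Dual F V) := by
        intro x y hxy
        have h1 : ∀ z, s (x - y) z = 0 := by
          intro z
          rw [map_sub, LinearMap.sub_apply, LinearMap.ext_iff.mp hxy z, sub_self]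
        exact sub_eq_zero.mp (hnd _ h1)
      have hsV : Function.Surjective (s : V →ₗ[F] Module.Dual F V) :=
        (LinearMap.injective_iff_surjective_of_finrank_eq_finrank
          (Subspace.dual_finrank_eq).symm).mp hsinj
      have hdual : Function.Surjective (W.subtype.dualMap) :=
        LinearMap.dualMap_surjective_of_injective (Submodule.injective_subtype W)
      intro g
      obtain ⟨f, hf⟩ := hdual g
      obtain ⟨x, hx⟩ := hsV f
      refine ⟨x, ?_⟩
      ext w
      show s x (w : V) = g w
      rw [hx, ← hf]
      rfl
    have h := LinearMap.finrank_range_add_finrank_ker L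
    rw [hker, LinearMap.range_eq_top.mpr hsurjL] at h
    have hdW : Module.finrank F (W →ₗ[F] F) = Module.finrank F W :=
      Subspace.dual_finrank_eq
    rw [finrank_top, hdW] at h
    omega
  have hrank : Module.finrank F V₀ = 2 * Module.finrank F W := by omega
  refine ⟨V₀, V₁, h₀, h₁, hsup, hinf, horth, hWV₀, hrank, φ, ?_, ?_⟩
  · intro x y
    rw [hφapp, hφapp, hsbar]
  · intro x
    rw [hφapp, hφapp, hubar]
end

section
/- Let F be a field of characteristic not 2, V a nonzero finite-dimensional F-vector space with a symplectic form s, and u ∈ Sp(s) a cyclic transformation (there is a vector x ∈ V whose iterates u^k(x), k ∈ ℕ, span V) whose minimal polynomial p has degree equal to dim V, is a palindromial, and satisfies p(1) ≠ 0 and p(-1) ≠ 0 (this covers exactly the indecomposable s-pairs of types I and II). Then there exists a Lagrangian L of (V, s) such that the bilinear form s_{u,L} : (x, y) ↦ s(x, u y) on L is symmetric and nondegenerate. -/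
open Polynomial

noncomputable def dick (F : Type*) [Field F] : ℕ → Polynomial F
  | 0 => 2
  | 1 => X
  | (k+2) => X * dick F (k+1) - dick F k

theorem dick_degree_le (F : Type*) [Field F] : ∀ k, (dick F k).degree ≤ k := by
  have H : ∀ k, (dick F k).degree ≤ k ∧ (dick F (k+1)).degree ≤ (k+1) := by
    intro k
    induction k with
    | zero =>
      constructor
      · show (2 : Polynomial F).degree ≤ (0:ℕ)
        have : (2 : Polynomial F) = C 2 := rfl
        rw [this]; exact degree_C_le
      · show (X : Polynomial F).degree ≤ (1:ℕ)
        exact degree_X_le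
    | succ k ih =>
      refine ⟨ih.2, ?_⟩
      show (X * dick F (k+1) - dick F k).degree ≤ ((k+2 : ℕ) : WithBot ℕ)
      refine le_trans (degree_sub_le _ _) ?_
      rw [max_le_iff]
      constructor
      · refine le_trans (degree_mul_le _ _) ?_
        refine le_trans (add_le_add degree_X_le ih.2) ?_
        exact le_of_eq (by push_cast; ring)
      · refine le_trans ih.1 ?_
        exact_mod_cast Nat.le_add_right k 2
  exact fun k => (H k).1

theorem dick_monic (F : Type*) [Field F] :
    ∀ k, (dick F (k+1)).Monic ∧ (dick F (k+1)).degree = ((k+1 : ℕ) : WithBot ℕ) := by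
  intro k
  induction k with
  | zero => exact ⟨monic_X, degree_X⟩
  | succ k ih =>
    have hX : (X * dick F (k+1)).Monic := monic_X.mul ih.1
    have hXd : (X * dick F (k+1)).degree = ((k+2 : ℕ) : WithBot ℕ) := by
      rw [degree_mul, degree_X, ih.2]
      push_cast
      ring
    have hlt : (-(dick F k)).degree < (X * dick F (k+1)).degree := by
      rw [degree_neg, hXd]
      refine lt_of_le_of_lt (dick_degree_le F k) ?_
      exact_mod_cast (by omega : k < k + 2)
    constructor
    · show (X * dick F (k+1) - dick F k).Monic
      rw [sub_eq_add_neg]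
      exact hX.add_of_left hlt
    · show (X * dick F (k+1) - dick F k).degree = _
      rw [sub_eq_add_neg, degree_add_eq_left_of_degree_lt hlt, hXd]

theorem dick_aeval {F : Type*} [Field F] {A : Type*} [Ring A] [Algebra F A]
    (a b : A) (hab : a * b = 1) (hba : b * a = 1) :
    ∀ k, Polynomial.aeval (a + b) (dick F k) = a ^ k + b ^ k := by
  have H : ∀ k, (Polynomial.aeval (a + b) (dick F k) = a ^ k + b ^ k) ∧
      (Polynomial.aeval (a + b) (dick F (k+1)) = a ^ (k+1) + b ^ (k+1)) := by
    intro k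
    induction k with
    | zero =>
      constructor
      · show Polynomial.aeval (a+b) (2 : Polynomial F) = _
        rw [map_ofNat]
        norm_num
      · show Polynomial.aeval (a+b) (X : Polynomial F) = _
        rw [aeval_X, pow_one, pow_one]
    | succ k ih =>
      refine ⟨ih.2, ?_⟩
      show Polynomial.aeval (a+b) (X * dick F (k+1) - dick F k) = _
      rw [map_sub, map_mul, aeval_X, ih.1, ih.2]
      have h1 : a * b^(k+1) = b^k := by rw [pow_succ', ← mul_assoc, hab, one_mul]
      have h2 : b * a^(k+1) = a^k := by rw [pow_succ', ← mul_assoc, hba, one_mul]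
      calc (a+b) * (a^(k+1)+b^(k+1)) - (a^k+b^k)
          = a*a^(k+1) + a*b^(k+1) + (b*a^(k+1) + b*b^(k+1)) - (a^k + b^k) := by
            rw [add_mul, mul_add, mul_add]
        _ = a^(k+2) + b^k + (a^k + b^(k+2)) - (a^k + b^k) := by
            rw [h1, h2, ← pow_succ', ← pow_succ']
        _ = a^(k+2) + b^(k+2) := by abel
  exact fun k => (H k).1

/-- Let `(V, s)` be a nonzero finite-dimensional symplectic space over a field `F` of
characteristic not 2 and let `u ∈ Sp(s)` be cyclic, with minimal polynomial `p` of
degree `dim V`, which is a palindromial (`p = p♯`) with `p(1) ≠ 0` and `p(-1) ≠ 0`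
(an indecomposable s-pair of type I or II). Then there exists a Lagrangian `L` of
`(V, s)` such that the bilinear form `(x, y) ↦ s(x, u y)` on `L` is symmetric and
nondegenerate. -/
theorem exists_good_lagrangian_of_type_I_II
    (F : Type*) [Field F] (hF : ringChar F ≠ 2)
    (V : Type*) [AddCommGroup V] [Module F V] [FiniteDimensional F V] [Nontrivial V]
    (s : V →ₗ[F] V →ₗ[F] F)
    (halt : ∀ x, s x x = 0)
    (hnd : ∀ x, (∀ y, s x y = 0) → x = 0)
    (u : V ≃ₗ[F] V)
    (hu : ∀ x y, s (u x) (u y) = s x y)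
    (hcyc : ∃ x : V, Submodule.span F
      (Set.range fun k : ℕ => ((u : V →ₗ[F] V) ^ k) x) = ⊤)
    (p : Polynomial F)
    (hp : p = minpoly F (u : V →ₗ[F] V))
    (hdeg : p.natDegree = Module.finrank F V)
    (hpal : p = C (p.coeff 0)⁻¹ * p.reverse)
    (h1 : p.eval 1 ≠ 0)
    (hneg1 : p.eval (-1) ≠ 0) :
    ∃ L : Submodule F V,
      (∀ x ∈ L, ∀ y ∈ L, s x y = 0) ∧
      2 * Module.finrank F L = Module.finrank F V ∧
      (∀ x ∈ L, ∀ y ∈ L, s x (u y) = s y (u x)) ∧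
      (∀ x ∈ L, (∀ y ∈ L, s x (u y) = 0) → x = 0) := by
  classical
  set n := p.natDegree with hn
  have two_ne : (2:F) ≠ 0 := Ring.two_ne_zero hF
  have hmono : p.Monic := by rw [hp]; exact minpoly.monic (LinearMap.isIntegral _)
  have hcoe : ∀ i, i ≤ n → p.coeff i = (p.coeff 0)⁻¹ * p.coeff (n - i) := by
    intro i hi
    conv_lhs => rw [hpal]
    rw [coeff_C_mul, coeff_reverse, revAt_le hi]
  have hn1 : p.coeff n = 1 := hmono.coeff_natDegree
  have hc0 : p.coeff 0 ≠ 0 := by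
    intro h
    have h2 := hcoe n le_rfl
    rw [h, Nat.sub_self, hn1] at h2
    simp at h2
  -- the sum reflection helper
  have hrefl : ∀ f : ℕ → F, ∑ i ∈ Finset.range (n+1), f (n - i) = ∑ i ∈ Finset.range (n+1), f i := by
    intro f
    have h := Finset.sum_range_reflect f (n+1)
    simp only [Nat.add_sub_cancel] at h
    exact h
  have heval1 : p.eval 1 = ∑ i ∈ Finset.range (n+1), p.coeff i := by
    rw [eval_eq_sum_range]
    simp
    rfl
  -- p.coeff 0 = 1
  have ha0 : p.coeff 0 = 1 := by
    have h00 := hcoe 0 (Nat.zero_le n)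
    rw [Nat.sub_zero, hn1, mul_one] at h00
    have hsq : p.coeff 0 * p.coeff 0 = 1 := by
      nth_rewrite 1 [h00]
      exact inv_mul_cancel₀ hc0
    rcases mul_self_eq_one_iff.mp hsq with h | h
    · exact h
    · exfalso
      have hsk : ∀ i, i ≤ n → p.coeff i = - p.coeff (n - i) := by
        intro i hi
        rw [hcoe i hi, h, inv_neg, inv_one, neg_one_mul]
      have hS : (∑ i ∈ Finset.range (n+1), p.coeff i) = -(∑ i ∈ Finset.range (n+1), p.coeff i) := by
        conv_lhs => rw [← hrefl (fun i => p.coeff i)]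
        calc ∑ i ∈ Finset.range (n+1), p.coeff (n - i)
            = ∑ i ∈ Finset.range (n+1), -(p.coeff (n - (n - i))) := by
              refine Finset.sum_congr rfl (fun i hi => ?_)
              exact hsk (n - i) (by omega)
          _ = -(∑ i ∈ Finset.range (n+1), p.coeff (n - (n - i))) := by
              rw [Finset.sum_neg_distrib]
          _ = -(∑ i ∈ Finset.range (n+1), p.coeff i) := by
              congr 1
              refine Finset.sum_congr rfl (fun i hi => ?_)
              have hi' : i ≤ n := by
                have := Finset.mem_range.mp hi; omega
              rw [show n - (n - i) = i from by omega]
      have hz : (∑ i ∈ Finset.range (n+1), p.coeff i) = 0 := by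
        have h2 : (2:F) * (∑ i ∈ Finset.range (n+1), p.coeff i) = 0 := by
          linear_combination hS
        exact (mul_eq_zero.mp h2).resolve_left two_ne
      exact h1 (by rw [heval1, hz])
  have hsym : ∀ i, i ≤ n → p.coeff i = p.coeff (n - i) := by
    intro i hi
    rw [hcoe i hi, ha0, inv_one, one_mul]
  -- n is even
  obtain ⟨m, hm⟩ : ∃ m, n = 2 * m := by
    rcases Nat.even_or_odd n with he | ho
    · obtain ⟨m, hm⟩ := he
      exact ⟨m, by omega⟩
    · exfalso
      have hpair : ∀ i, i ≤ n → p.coeff i * (-1:F)^i + p.coeff (n-i) * (-1:F)^(n-i) = 0 := by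
        intro i hi
        have e1 : p.coeff (n - i) = p.coeff i := (hsym i hi).symm
        have e2 : (-1:F)^(n-i) = -(-1:F)^i := by
          have hadd : (-1:F)^(n-i) * (-1:F)^i = (-1:F)^n := by
            rw [← pow_add, show n - i + i = n from by omega]
          have hoddp : (-1:F)^n = -1 := Odd.neg_one_pow ho
          have hsq : (-1:F)^i * (-1:F)^i = 1 := by
            rw [← pow_add]
            exact Even.neg_one_pow ⟨i, rfl⟩
          calc (-1:F)^(n-i) = (-1:F)^(n-i) * ((-1:F)^i * (-1:F)^i) := by rw [hsq, mul_one]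
            _ = ((-1:F)^(n-i) * (-1:F)^i) * (-1:F)^i := by ring
            _ = -(-1:F)^i := by rw [hadd, hoddp]; ring
        rw [e1, e2]; ring
      have hevalm : p.eval (-1) = ∑ i ∈ Finset.range (n+1), p.coeff i * (-1:F)^i := by
        rw [eval_eq_sum_range]
      set S : F := ∑ i ∈ Finset.range (n+1), p.coeff i * (-1:F)^i with hSdef
      have h2S : S + S = 0 := by
        nth_rewrite 2 [hSdef]
        rw [← hrefl (fun i => p.coeff i * (-1:F)^i), hSdef, ← Finset.sum_add_distrib]
        refine Finset.sum_eq_zero (fun i hi => ?_)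
        have hi' : i ≤ n := by have := Finset.mem_range.mp hi; omega
        exact hpair i hi'
      have hz : S = 0 := by
        have h2 : (2:F) * S = 0 := by linear_combination h2S
        exact (mul_eq_zero.mp h2).resolve_left two_ne
      exact hneg1 (by rw [hevalm, hz])
  have hm1 : 1 ≤ m := by
    have hpos : 0 < Module.finrank F V := Module.finrank_pos
    omega
  -- the endomorphisms
  obtain ⟨x₀, hx₀⟩ := hcyc
  set U : Module.End F V := (u : V →ₗ[F] V) with hU
  set W : Module.End F V := (u.symm : V →ₗ[F] V) with hW
  have hUW : U * W = 1 := by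
    ext z
    simp [hU, hW, Module.End.mul_apply]
  have hWU : W * U = 1 := by
    ext z
    simp [hU, hW, Module.End.mul_apply]
  have hcomm : U * W = W * U := hUW.trans hWU.symm
  set vE : Module.End F V := U + W with hvE
  have hUp : Polynomial.aeval U p = 0 := by rw [hp]; exact minpoly.aeval F _
  have hUWpow : ∀ j : ℕ, U^j * W^j = 1 := by
    intro j
    rw [← Commute.mul_pow hcomm, hUW, one_pow]
  have hWUpow : ∀ j : ℕ, W^j * U^j = 1 := by
    intro j
    rw [← Commute.mul_pow (hWU.trans hUW.symm), hWU, one_pow]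
  have hdva : ∀ k, Polynomial.aeval vE (dick F k) = U^k + W^k := dick_aeval U W hUW hWU
  set r : Polynomial F := C (p.coeff m) + ∑ k ∈ Finset.range m, C (p.coeff (m+k+1)) * dick F (k+1) with hr
  have hdickdeg : ∀ k, (dick F k).natDegree ≤ k := fun k =>
    natDegree_le_iff_degree_le.mpr (dick_degree_le F k)
  have hrdeg : r.natDegree ≤ m := by
    rw [hr]
    refine le_trans (natDegree_add_le _ _) ?_
    rw [max_le_iff]
    refine ⟨by simp, ?_⟩
    refine natDegree_sum_le_of_forall_le _ _ (fun k hk => ?_)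
    refine le_trans (natDegree_C_mul_le _ _) ?_
    have := Finset.mem_range.mp hk
    exact le_trans (hdickdeg (k+1)) (by omega)
  have hdickm : (dick F m).Monic ∧ (dick F m).natDegree = m := by
    obtain ⟨m', rfl⟩ : ∃ m', m = m' + 1 := ⟨m - 1, by omega⟩
    exact ⟨(dick_monic F m').1, natDegree_eq_of_degree_eq_some (dick_monic F m').2⟩
  have hrm : r.coeff m = 1 := by
    rw [hr, coeff_add, coeff_C, if_neg (by omega : ¬ m = 0), zero_add, finset_sum_coeff]
    rw [Finset.sum_eq_single (m-1)]
    · rw [coeff_C_mul, show m - 1 + 1 = m from by omega]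
      have hc : (dick F m).coeff m = 1 := by
        have := hdickm.1
        rw [Monic, leadingCoeff, hdickm.2] at this
        exact this
      rw [hc, mul_one, show m + (m-1) + 1 = n from by omega, hn1]
    · intro k hk hkne
      rw [coeff_C_mul]
      have hk' : k < m := Finset.mem_range.mp hk
      have : (dick F (k+1)).coeff m = 0 := by
        refine coeff_eq_zero_of_natDegree_lt (lt_of_le_of_lt (hdickdeg (k+1)) ?_)
        omega
      rw [this, mul_zero]
    · intro hmem
      exact absurd (Finset.mem_range.mpr (by omega : m - 1 < m)) hmem
  -- the key computation
  have hterm : ∀ k ∈ Finset.range m,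
      U^m * Polynomial.aeval vE (C (p.coeff (m+k+1)) * dick F (k+1))
      = p.coeff (m+1+k) • U^(m+1+k) + p.coeff (m-1-k) • U^(m-1-k) := by
    intro k hk
    have hk' : k < m := Finset.mem_range.mp hk
    rw [map_mul, aeval_C, hdva (k+1), ← Algebra.smul_def, mul_smul_comm, mul_add]
    have e1 : U^m * U^(k+1) = U^(m+1+k) := by
      rw [← pow_add, show m + (k+1) = m+1+k from by omega]
    have e2 : U^m * W^(k+1) = U^(m-1-k) := by
      calc U^m * W^(k+1) = (U^(m-1-k) * U^(k+1)) * W^(k+1) := by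
            rw [← pow_add, show m - 1 - k + (k+1) = m from by omega]
        _ = U^(m-1-k) * (U^(k+1) * W^(k+1)) := by rw [mul_assoc]
        _ = U^(m-1-k) := by rw [hUWpow, mul_one]
    rw [e1, e2, smul_add, show m+k+1 = m+1+k from by omega]
    congr 1
    rw [hsym (m+1+k) (by omega), show n - (m+1+k) = m-1-k from by omega]
  have hkey : U^m * Polynomial.aeval vE r = Polynomial.aeval U p := by
    rw [hr, map_add, map_sum, mul_add, Finset.mul_sum, Finset.sum_congr rfl hterm]
    have hleft : U^m * Polynomial.aeval vE (C (p.coeff m)) = p.coeff m • U^m := by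
      rw [aeval_C, ← Algebra.commutes, ← Algebra.smul_def]
    rw [hleft, Polynomial.aeval_eq_sum_range (p := p) U]
    have hsplit : ∑ i ∈ Finset.range (n+1), p.coeff i • U^i
        = (∑ i ∈ Finset.range (m+1), p.coeff i • U^i)
          + ∑ k ∈ Finset.range m, p.coeff (m+1+k) • U^(m+1+k) := by
      rw [← Finset.sum_range_add_sum_Ico _ (by omega : m+1 ≤ n+1)]
      congr 1
      rw [Finset.sum_Ico_eq_sum_range, show n+1-(m+1) = m from by omega]
    have hrefl2 : ∑ i ∈ Finset.range m, p.coeff i • U^i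
        = ∑ k ∈ Finset.range m, p.coeff (m-1-k) • U^(m-1-k) :=
      (Finset.sum_range_reflect (fun j => p.coeff j • U^j) m).symm
    rw [hsplit, Finset.sum_range_succ, hrefl2, Finset.sum_add_distrib]
    abel
  have hrv : Polynomial.aeval vE r = 0 := by
    have h0 : U^m * Polynomial.aeval vE r = 0 := by rw [hkey, hUp]
    calc Polynomial.aeval vE r = (W^m * U^m) * Polynomial.aeval vE r := by rw [hWUpow, one_mul]
      _ = W^m * (U^m * Polynomial.aeval vE r) := mul_assoc _ _ _
      _ = 0 := by rw [h0, mul_zero]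
  have hvm : vE^m = - ∑ i ∈ Finset.range m, r.coeff i • vE^i := by
    have h := Polynomial.aeval_eq_sum_range' (n := m+1) (by omega : r.natDegree < m+1) vE
    rw [hrv, Finset.sum_range_succ, hrm, one_smul] at h
    exact eq_neg_of_add_eq_zero_right h.symm
  -- the symplectic-adjointness facts
  have hsAdj1 : ∀ x y : V, s (U x) y = s x (W y) := by
    intro x y
    have h := hu x (u.symm y)
    rw [u.apply_symm_apply] at h
    simpa [hU, hW] using h
  have hsAdj2 : ∀ x y : V, s (W x) y = s x (U y) := by
    intro x y
    have h := hu (u.symm x) y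
    rw [u.apply_symm_apply] at h
    simpa [hU, hW] using h.symm
  have hvadj : ∀ x y : V, s (vE x) y = s x (vE y) := by
    intro x y
    rw [hvE]
    rw [LinearMap.add_apply, LinearMap.add_apply, map_add, LinearMap.add_apply, map_add,
      hsAdj1, hsAdj2]
    exact add_comm _ _
  have hvpow : ∀ (k:ℕ) (x y : V), s ((vE^k) x) y = s x ((vE^k) y) := by
    intro k
    induction k with
    | zero => simp
    | succ k ih =>
      intro x y
      rw [pow_succ, Module.End.mul_apply, Module.End.mul_apply, ih (vE x) y, hvadj,
        ← Module.End.mul_apply, ← Module.End.mul_apply, ← pow_succ', ← pow_succ]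
  have hskew : ∀ x y : V, s x y = - s y x := by
    intro x y
    have h := halt (x+y)
    simp only [map_add, LinearMap.add_apply] at h
    rw [halt x, halt y] at h
    linear_combination h
  have hdiag : ∀ k, s x₀ ((vE^k) x₀) = 0 := by
    intro k
    have h1 := hvpow k x₀ x₀
    have h2 := hskew x₀ ((vE^k) x₀)
    have h3 : (2:F) * s x₀ ((vE^k) x₀) = 0 := by linear_combination h2 - h1
    exact (mul_eq_zero.mp h3).resolve_left two_ne
  set L : Submodule F V := Submodule.span F (Set.range fun k : ℕ => (vE^k) x₀) with hL
  have hgen : ∀ k, (vE^k) x₀ ∈ L := fun k => Submodule.subset_span ⟨k, rfl⟩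
  have hpair : ∀ i j, s ((vE^i) x₀) ((vE^j) x₀) = 0 := by
    intro i j
    rw [hvpow i, ← Module.End.mul_apply, ← pow_add]
    exact hdiag (i+j)
  have hLleft : ∀ i, ∀ y ∈ L, s ((vE^i) x₀) y = 0 := by
    intro i y hy
    induction hy using Submodule.span_induction with
    | mem z hz => obtain ⟨j, rfl⟩ := hz; exact hpair i j
    | zero => simp
    | add a b _ _ ha hb => rw [map_add, ha, hb, add_zero]
    | smul c a _ ha => rw [map_smul, ha, smul_zero]
  have hLL : ∀ x ∈ L, ∀ y ∈ L, s x y = 0 := by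
    intro x hx
    induction hx using Submodule.span_induction with
    | mem z hz => obtain ⟨i, rfl⟩ := hz; exact fun y hy => hLleft i y hy
    | zero => intro y hy; simp
    | add a b _ _ ha hb =>
      intro y hy
      rw [map_add, LinearMap.add_apply, ha y hy, hb y hy, add_zero]
    | smul c a _ ha =>
      intro y hy
      rw [map_smul, LinearMap.smul_apply, ha y hy, smul_zero]
  have hvL : ∀ x ∈ L, vE x ∈ L := by
    intro x hx
    induction hx using Submodule.span_induction with
    | mem z hz =>
      obtain ⟨k, rfl⟩ := hz
      rw [← Module.End.mul_apply, ← pow_succ']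
      exact hgen (k+1)
    | zero => rw [map_zero]; exact zero_mem L
    | add a b _ _ ha hb => rw [map_add]; exact add_mem ha hb
    | smul c a _ ha => rw [map_smul]; exact Submodule.smul_mem L c ha
  have hx0L : x₀ ∈ L := by simpa using hgen 0
  have hsup : L ⊔ L.map U = ⊤ := by
    refine le_antisymm le_top ?_
    rw [← hx₀]
    refine Submodule.span_le.mpr ?_
    rintro _ ⟨k, rfl⟩
    show (U^k) x₀ ∈ L ⊔ L.map U
    induction k with
    | zero =>
      simpa using Submodule.mem_sup_left hx0L
    | succ k ih =>
      obtain ⟨a, ha, b, hb, hab⟩ := Submodule.mem_sup.mp ih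
      obtain ⟨c, hc, rfl⟩ := hb
      have hstep : (U^(k+1)) x₀ = U a + (U (vE c) - c) := by
        have hU2 : U * U = U * vE - 1 := by
          rw [hvE, mul_add, hUW]
          exact (add_sub_cancel_right _ _).symm
        have : (U^(k+1)) x₀ = U ((U^k) x₀) := by
          rw [pow_succ', Module.End.mul_apply]
        rw [this, ← hab, map_add]
        congr 1
        calc U (U c) = (U * U) c := by rw [Module.End.mul_apply]
          _ = (U * vE - 1) c := by rw [hU2]
          _ = U (vE c) - c := by
            rw [LinearMap.sub_apply, Module.End.mul_apply, Module.End.one_apply]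
      rw [hstep]
      refine add_mem (Submodule.mem_sup_right (Submodule.mem_map_of_mem ha)) ?_
      refine sub_mem (Submodule.mem_sup_right (Submodule.mem_map_of_mem (hvL c hc)))
        (Submodule.mem_sup_left hc)
  have hLle' : L ≤ Submodule.span F
      ((Finset.image (fun k => (vE^k) x₀) (Finset.range m) : Finset V) : Set V) := by
    rw [hL]
    refine Submodule.span_le.mpr ?_
    rintro _ ⟨k, rfl⟩
    show (vE^k) x₀ ∈ _
    induction k using Nat.strong_induction_on with
    | _ k ih =>
      by_cases hkm : k < m
      · exact Submodule.subset_span (by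
          simp only [Finset.coe_image, Finset.coe_range, Set.mem_image]
          exact ⟨k, by simpa using hkm, rfl⟩)
      · push_neg at hkm
        have hksplit : vE^k = vE^(k-m) * vE^m := by
          rw [← pow_add]
          congr 1
          omega
        rw [hksplit, Module.End.mul_apply, hvm]
        rw [LinearMap.neg_apply, LinearMap.sum_apply, map_neg, map_sum]
        refine neg_mem (Submodule.sum_mem _ (fun i hi => ?_))
        rw [LinearMap.smul_apply, map_smul, ← Module.End.mul_apply, ← pow_add]
        refine Submodule.smul_mem _ _ (ih (k-m+i) ?_)
        have := Finset.mem_range.mp hi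
        omega
  have hfin1 : Module.finrank F L ≤ m := by
    refine le_trans (Submodule.finrank_mono hLle') ?_
    refine le_trans (finrank_span_finset_le_card _) ?_
    exact le_trans Finset.card_image_le (by simp)
  have hfmap : Module.finrank F (L.map U) = Module.finrank F L :=
    LinearEquiv.finrank_map_eq u L
  have hV2m : Module.finrank F V = 2 * m := by rw [← hdeg]; omega
  have hdimL : Module.finrank F L = m := by
    have hts := Submodule.finrank_sup_add_finrank_inf_eq L (L.map U)
    rw [hsup, finrank_top] at hts
    omega
  refine ⟨L, hLL, by omega, ?_, ?_⟩
  · intro x hx y hy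
    show s x (U y) = s y (U x)
    have h1 : s x (vE y) = 0 := hLL x hx (vE y) (hvL y hy)
    have h2 : s x (U y) + s x (W y) = 0 := by
      rw [← map_add]
      rw [hvE] at h1
      simpa [LinearMap.add_apply] using h1
    have h3 := hskew y (U x)
    have h4 := hsAdj1 x y
    linear_combination h2 - h3 + h4
  · intro x hx hxy
    refine hnd x (fun w => ?_)
    have hw : w ∈ L ⊔ L.map U := by rw [hsup]; trivial
    obtain ⟨a, ha, b, hb, hab⟩ := Submodule.mem_sup.mp hw
    obtain ⟨c, hc, rfl⟩ := hb
    rw [← hab, map_add, hLL x hx a ha, zero_add]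
    exact hxy c hc
end

section
/- Let F be a field of characteristic not 2, let n ≥ 1, let V be a 2n-dimensional F-vector space with a symplectic form s, let η ∈ {1, -1}, and let u ∈ Sp(s) be a cyclic transformation (there is a vector x ∈ V whose iterates u^k(x), k ∈ ℕ, span V) whose minimal polynomial is (X - η)^{2n} (an indecomposable s-pair of type III). Then there exists a Lagrangian L of (V, s) such that the bilinear form s_{u,L} : (x, y) ↦ s(x, u y) on L is symmetric and nondegenerate. -/
open Polynomial

namespace TypeIIIAux
variable {F : Type*} [Field F]
noncomputable def mpoly (η : F) (n : ℕ) : F[X] := (X - C η) ^ (2*n)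
noncomputable def rootm (η : F) (n : ℕ) : AdjoinRoot (mpoly η n) := AdjoinRoot.root _
noncomputable def etaR (η : F) (n : ℕ) : AdjoinRoot (mpoly η n) := algebraMap F _ η
noncomputable def zeta (η : F) (n : ℕ) : AdjoinRoot (mpoly η n) :=
  aeval (rootm η n) (-(mpoly η n).divX)
noncomputable def muR (η : F) (n : ℕ) : AdjoinRoot (mpoly η n) := rootm η n - etaR η n
noncomputable def piR (η : F) (n : ℕ) : AdjoinRoot (mpoly η n) :=
  etaR η n * rootm η n + etaR η n * zeta η n - 2

variable (η : F) (n : ℕ)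

lemma aeval_root : aeval (rootm η n) (mpoly η n) = 0 := by
  rw [rootm, AdjoinRoot.aeval_eq, AdjoinRoot.mk_self]

lemma etaR_mul (hη2 : η * η = 1) : etaR η n * etaR η n = 1 := by
  rw [etaR, ← map_mul, hη2, map_one]

lemma coeff_mpoly (hη2 : η * η = 1) : (mpoly η n).coeff 0 = 1 := by
  rw [mpoly, coeff_zero_eq_eval_zero]
  simp only [eval_pow, eval_sub, eval_X, eval_C, zero_sub]
  rw [pow_mul]
  simp [sq, hη2]

lemma root_mul_zeta (hη2 : η * η = 1) : rootm η n * zeta η n = 1 := by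
  have h := congrArg (aeval (rootm η n)) (X_mul_divX_add (mpoly η n))
  rw [map_add, map_mul, aeval_X, aeval_root, aeval_C, coeff_mpoly η n hη2, map_one] at h
  unfold zeta
  rw [map_neg, mul_neg]
  linear_combination -h

lemma mu_pow : muR η n ^ (2*n) = 0 := by
  have h := aeval_root η n
  change aeval (rootm η n) ((X - C η) ^ (2*n)) = 0 at h
  rw [map_pow, map_sub, aeval_X, aeval_C] at h
  unfold muR rootm etaR
  exact h

lemma pi_eq (hη2 : η * η = 1) :
    piR η n = muR η n ^ 2 * (etaR η n * zeta η n) := by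
  have h1 := root_mul_zeta η n hη2
  have h2 := etaR_mul η n hη2
  rw [piR, muR]
  linear_combination (2 * etaR η n * etaR η n - etaR η n * rootm η n) * h1 +
    (2 - etaR η n * zeta η n) * h2

lemma pi_pow (hη2 : η * η = 1) : piR η n ^ n = 0 := by
  rw [pi_eq η n hη2, mul_pow, ← pow_mul, mu_pow, zero_mul]

lemma mu_pow_even (hη2 : η * η = 1) (k : ℕ) :
    muR η n ^ (2*k) = etaR η n ^ k * (piR η n ^ k * rootm η n ^ k) := by
  induction k with
  | zero => simp
  | succ k ih =>
    have step : etaR η n * (piR η n * rootm η n) = muR η n ^ 2 := by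
      rw [pi_eq η n hη2]
      linear_combination (muR η n ^ 2 * (etaR η n * etaR η n)) * root_mul_zeta η n hη2 +
        muR η n ^ 2 * etaR_mul η n hη2
    calc muR η n ^ (2*(k+1)) = muR η n ^ (2*k) * muR η n ^ 2 := by ring
    _ = (etaR η n ^ k * (piR η n ^ k * rootm η n ^ k)) * (etaR η n * (piR η n * rootm η n)) := by
        rw [ih, step]
    _ = etaR η n ^ (k+1) * (piR η n ^ (k+1) * rootm η n ^ (k+1)) := by ring

lemma root_pow (k : ℕ) : ∃ g, rootm η n ^ k = etaR η n ^ k + muR η n * g := by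
  induction k with
  | zero => exact ⟨0, by simp⟩
  | succ k ih =>
    obtain ⟨g, hg⟩ := ih
    refine ⟨etaR η n ^ k + rootm η n * g, ?_⟩
    calc rootm η n ^ (k+1) = rootm η n * rootm η n ^ k := by ring
    _ = rootm η n * (etaR η n ^ k + muR η n * g) := by rw [hg]
    _ = etaR η n ^ (k+1) + muR η n * (etaR η n ^ k + rootm η n * g) := by rw [muR]; ring

lemma mu_even (hη2 : η * η = 1) (k : ℕ) :
    ∃ z, muR η n ^ (2*k) = piR η n ^ k + muR η n ^ (2*k+1) * z := by
  obtain ⟨g, hg⟩ := root_pow η n k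
  refine ⟨etaR η n ^ k * (etaR η n * zeta η n) ^ k * g, ?_⟩
  have hπk : piR η n ^ k = muR η n ^ (2*k) * (etaR η n * zeta η n) ^ k := by
    rw [pi_eq η n hη2, mul_pow, ← pow_mul]
  have hηk : etaR η n ^ k * etaR η n ^ k = 1 := by
    rw [← mul_pow, etaR_mul η n hη2, one_pow]
  calc muR η n ^ (2*k) = etaR η n ^ k * (piR η n ^ k * rootm η n ^ k) := mu_pow_even η n hη2 k
  _ = etaR η n ^ k * (piR η n ^ k * (etaR η n ^ k + muR η n * g)) := by rw [hg]
  _ = (etaR η n ^ k * etaR η n ^ k) * piR η n ^ k + muR η n * (etaR η n ^ k * piR η n ^ k * g) := by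
      ring
  _ = piR η n ^ k + muR η n * (etaR η n ^ k * (muR η n ^ (2*k) * (etaR η n * zeta η n) ^ k) * g) := by
      rw [hηk, hπk]; ring_nf
  _ = piR η n ^ k + muR η n ^ (2*k+1) * (etaR η n ^ k * (etaR η n * zeta η n) ^ k * g) := by ring

lemma sum_root_zeta (hη2 : η * η = 1) :
    rootm η n + zeta η n = etaR η n * piR η n + 2 * etaR η n := by
  rw [piR]
  linear_combination (-(rootm η n + zeta η n)) * etaR_mul η n hη2

lemma root_pow_sum (k : ℕ) :
    rootm η n ^ k =
      ∑ i ∈ Finset.range (k+1),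
        algebraMap F (AdjoinRoot (mpoly η n)) (η ^ (k-i) * (k.choose i : F)) * muR η n ^ i := by
  have hr : rootm η n = muR η n + etaR η n := by rw [muR]; ring
  rw [hr, add_pow]
  refine Finset.sum_congr rfl fun i _ => ?_
  rw [map_mul, map_pow]
  have : algebraMap F (AdjoinRoot (mpoly η n)) η = etaR η n := rfl
  rw [this]
  have : algebraMap F (AdjoinRoot (mpoly η n)) ((k.choose i : F)) = ((k.choose i : ℕ) : AdjoinRoot (mpoly η n)) := by
    rw [map_natCast]
  rw [this]
  ring

end TypeIIIAux

set_option maxHeartbeats 1000000 in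
open TypeIIIAux in
/-- Let `(V, s)` be a `2n`-dimensional symplectic space over a field `F` of
characteristic not 2, `η = ±1`, and let `u ∈ Sp(s)` be cyclic with minimal polynomial
`(X - η)^(2n)` (an indecomposable s-pair of type III). Then there exists a Lagrangian
`L` of `(V, s)` such that the bilinear form `(x, y) ↦ s(x, u y)` on `L` is symmetric
and nondegenerate. -/
theorem exists_good_lagrangian_of_type_III
    (F : Type*) [Field F] (hF : ringChar F ≠ 2)
    (n : ℕ) (hn : 1 ≤ n)
    (V : Type*) [AddCommGroup V] [Module F V] [FiniteDimensional F V]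
    (hdim : Module.finrank F V = 2 * n)
    (s : V →ₗ[F] V →ₗ[F] F)
    (halt : ∀ x, s x x = 0)
    (hnd : ∀ x, (∀ y, s x y = 0) → x = 0)
    (η : F) (hη : η = 1 ∨ η = -1)
    (u : V ≃ₗ[F] V)
    (hu : ∀ x y, s (u x) (u y) = s x y)
    (hcyc : ∃ x : V, Submodule.span F
      (Set.range fun k : ℕ => ((u : V →ₗ[F] V) ^ k) x) = ⊤)
    (hmin : minpoly F (u : V →ₗ[F] V) = (X - C η) ^ (2 * n)) :
    ∃ L : Submodule F V,
      (∀ x ∈ L, ∀ y ∈ L, s x y = 0) ∧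
      2 * Module.finrank F L = Module.finrank F V ∧
      (∀ x ∈ L, ∀ y ∈ L, s x (u y) = s y (u x)) ∧
      (∀ x ∈ L, (∀ y ∈ L, s x (u y) = 0) → x = 0) := by
  classical
  obtain ⟨e, he⟩ := hcyc
  have hη2 : η * η = 1 := by rcases hη with h | h <;> simp [h]
  have h2 : (2:F) ≠ 0 := Ring.two_ne_zero hF
  set UU : V →ₗ[F] V := (u : V →ₗ[F] V) with hUUdef
  have hU0 : aeval UU (mpoly η n) = 0 := by
    unfold mpoly
    rw [← hmin]
    exact minpoly.aeval F UU
  have hI : ∀ a ∈ Ideal.span {mpoly η n}, aeval UU a = 0 := by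
    intro a ha
    rw [Ideal.mem_span_singleton] at ha
    obtain ⟨c, rfl⟩ := ha
    rw [map_mul, hU0, zero_mul]
  set φ : AdjoinRoot (mpoly η n) →ₐ[F] (V →ₗ[F] V) :=
    Ideal.Quotient.liftₐ (Ideal.span {mpoly η n}) (aeval UU) hI with hφdef
  have hφmk : ∀ p : F[X], φ (AdjoinRoot.mk (mpoly η n) p) = aeval UU p := fun p => by
    rw [hφdef]; exact Ideal.Quotient.lift_mk _ _ _
  have hφρ : φ (rootm η n) = UU := by
    have h1 : rootm η n = AdjoinRoot.mk (mpoly η n) X := rfl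
    rw [h1, hφmk, aeval_X]
  have hφη : φ (etaR η n) = algebraMap F (Module.End F V) η := φ.commutes η
  set W : V →ₗ[F] V := φ (zeta η n) with hWdef
  set Pe : V →ₗ[F] V := φ (piR η n) with hPedef
  set Me : V →ₗ[F] V := φ (muR η n) with hMedef
  -- pointwise descriptions
  have hMe_apply : ∀ v, Me v = UU v - η • v := by
    intro v
    rw [hMedef, muR, map_sub, hφη, hφρ]
    simp [LinearMap.sub_apply, Module.algebraMap_end_apply]
  have hUW : ∀ v : V, UU (W v) = v := by
    intro v
    have h : φ (rootm η n) * φ (zeta η n) = 1 := by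
      rw [← map_mul, root_mul_zeta η n hη2, map_one]
    have := congrArg (fun f : V →ₗ[F] V => f v) h
    simpa [hφρ, Module.End.mul_apply] using this
  have hcoe : ∀ v, UU v = u v := fun _ => rfl
  -- adjointness
  have hadj1 : ∀ x y, s x (W y) = s (UU x) y := by
    intro x y
    conv_rhs => rw [← hUW y]
    exact (hu x (W y)).symm
  have hadj2 : ∀ x y, s (W x) y = s x (UU y) := by
    intro x y
    have h := hu (W x) y
    rw [← hcoe (W x), ← hcoe y, hUW x] at h
    exact h.symm
  have hskew : ∀ x y, s x y = - s y x := by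
    intro x y
    have h := halt (x + y)
    simp only [map_add, LinearMap.add_apply, halt] at h
    linear_combination h
  -- Pe pointwise
  have hPe_apply : ∀ v, Pe v = η • (UU v) + η • (W v) - (2:F) • v := by
    intro v
    rw [hPedef, piR, map_sub, map_add, map_mul, map_mul, hφη, hφρ, ← hWdef]
    have h2' : φ 2 = algebraMap F (Module.End F V) 2 := by
      rw [show (2 : AdjoinRoot (mpoly η n)) = algebraMap F _ 2 from (map_ofNat _ 2).symm]
      exact φ.commutes 2
    rw [h2']
    simp [LinearMap.sub_apply, LinearMap.add_apply, Module.End.mul_apply,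
      Module.algebraMap_end_apply]
  have hselfadj : ∀ x y, s (Pe x) y = s x (Pe y) := by
    intro x y
    rw [hPe_apply x, hPe_apply y]
    simp only [map_sub, map_add, map_smul, LinearMap.sub_apply, LinearMap.add_apply,
      LinearMap.smul_apply, smul_eq_mul, LinearMap.map_smulₛₗ, RingHom.id_apply]
    rw [hadj1 x y, hadj2 x y]
    ring
  have hselfadjk : ∀ (k : ℕ) (x y : V), s ((Pe^k) x) y = s x ((Pe^k) y) := by
    intro k
    induction k with
    | zero => intro x y; simp
    | succ k ih =>
      intro x y
      have e1 : (Pe^(k+1)) x = (Pe^k) (Pe x) := by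
        rw [pow_succ]; rfl
      have e2 : (Pe^(k+1)) y = Pe ((Pe^k) y) := by
        rw [pow_succ']; rfl
      rw [e1, e2, ih (Pe x) y, hselfadj x ((Pe^k) y)]
  have hdiag : ∀ (v : V) (k : ℕ), s v ((Pe^k) v) = 0 := by
    intro v k
    have h1 : s ((Pe^k) v) v = s v ((Pe^k) v) := hselfadjk k v v
    have h3 : s v ((Pe^k) v) = - s ((Pe^k) v) v := hskew _ _
    have : (2:F) * s v ((Pe^k) v) = 0 := by linear_combination h3 - h1
    rcases mul_eq_zero.mp this with h | h
    · exact absurd h h2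
    · exact h
  -- Pe^n = 0 and Me^(2n) = 0
  have hPen : Pe^n = 0 := by
    rw [hPedef, ← map_pow, pi_pow η n hη2, map_zero]
  have hMe2n : Me^(2*n) = 0 := by
    rw [hMedef, ← map_pow, mu_pow, map_zero]
  -- spanning by powers of Me
  have hMspan : Submodule.span F (Set.range fun i : ℕ => (Me^i) e) = ⊤ := by
    rw [eq_top_iff, ← he, Submodule.span_le]
    rintro _ ⟨k, rfl⟩
    have hpow : (UU^k) e =
        ∑ i ∈ Finset.range (k+1), (η^(k-i) * (k.choose i : F)) • ((Me^i) e) := by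
      have h1 : φ (rootm η n ^ k) = UU^k := by rw [map_pow, hφρ]
      rw [root_pow_sum η n k] at h1
      rw [← h1, map_sum, LinearMap.sum_apply]
      refine Finset.sum_congr rfl fun i _ => ?_
      rw [map_mul, map_pow, φ.commutes, ← hMedef, Module.End.mul_apply,
        Module.algebraMap_end_apply]
    show (UU^k) e ∈ Submodule.span F (Set.range fun i : ℕ => (Me^i) e)
    rw [hpow]
    exact Submodule.sum_mem _ fun i _ =>
      Submodule.smul_mem _ _ (Submodule.subset_span ⟨i, rfl⟩)
  -- generating family
  set gfam : Fin n ⊕ Fin n → V :=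
    Sum.elim (fun k => (Pe^(k:ℕ)) e) (fun k => Me ((Pe^(k:ℕ)) e)) with hgfam
  set T := Submodule.span F (Set.range gfam) with hTdef
  have hBmem : ∀ (j : ℕ), (∀ i : ℕ, (Me^(j+i)) e ∈ T) → ∀ w : V, (Me^j) w ∈ T := by
    intro j hj w
    have hw : w ∈ Submodule.span F (Set.range fun i : ℕ => (Me^i) e) := by
      rw [hMspan]; trivial
    have hle : Submodule.span F (Set.range fun i : ℕ => (Me^i) e) ≤ T.comap (Me^j) := by
      rw [Submodule.span_le]
      rintro _ ⟨i, rfl⟩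
      show (Me^j) ((Me^i) e) ∈ T
      have hji : (Me^j) ((Me^i) e) = (Me^(j+i)) e := by rw [pow_add]; rfl
      rw [hji]; exact hj i
    exact hle hw
  have hkey : ∀ k : ℕ, ∃ z : V, (Me^(2*k)) e = (Pe^k) e + (Me^(2*k+1)) z := by
    intro k
    obtain ⟨zR, hz⟩ := mu_even η n hη2 k
    refine ⟨(φ zR) e, ?_⟩
    have h := congrArg (fun f : V →ₗ[F] V => f e) (congrArg φ hz)
    simpa only [map_add, map_mul, map_pow, ← hMedef, ← hPedef, LinearMap.add_apply,
      Module.End.mul_apply] using h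
  have hbig : ∀ i : ℕ, 2*n ≤ i → (Me^i) e = 0 := by
    intro i hi
    have h0 : Me^i = 0 := by
      have h1 : Me^i = Me^(2*n) * Me^(i-2*n) := by rw [← pow_add]; congr 1; omega
      rw [h1, hMe2n, zero_mul]
    rw [h0]; rfl
  have hdown : ∀ d j, 2*n ≤ j + d → ∀ i, j ≤ i → (Me^i) e ∈ T := by
    intro d
    induction d with
    | zero =>
      intro j hj i hi
      rw [hbig i (by omega)]
      exact T.zero_mem
    | succ d ih =>
      intro j hj i hi
      rcases Nat.lt_or_ge j i with h | h
      · exact ih (j+1) (by omega) i (by omega)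
      · have hij : i = j := le_antisymm h hi
        by_cases hjn : 2*n ≤ i
        · rw [hbig i hjn]; exact T.zero_mem
        · rcases Nat.even_or_odd i with ⟨k, hk⟩ | ⟨k, hk⟩
          · obtain ⟨z, hz⟩ := hkey k
            have h2k : i = 2*k := by omega
            rw [h2k, hz]
            refine T.add_mem ?_ ?_
            · have hkn : k < n := by omega
              exact Submodule.subset_span ⟨Sum.inl ⟨k, hkn⟩, rfl⟩
            · exact hBmem (2*k+1)
                (fun i' => ih (2*k+1) (by omega) (2*k+1+i') (by omega)) z
          · obtain ⟨z, hz⟩ := hkey k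
            have ha : Me ((Me^(2*k)) e) = (Me^(2*k+1)) e := by rw [pow_succ']; rfl
            have hb : Me ((Me^(2*k+1)) z) = (Me^(2*k+2)) z := by
              conv_rhs => rw [pow_succ']
              rfl
            have hz' : (Me^(2*k+1)) e = Me ((Pe^k) e) + (Me^(2*k+2)) z := by
              rw [← ha, hz, map_add, hb]
            rw [hk, hz']
            refine T.add_mem ?_ ?_
            · have hkn : k < n := by omega
              exact Submodule.subset_span ⟨Sum.inr ⟨k, hkn⟩, rfl⟩
            · exact hBmem (2*k+2)
                (fun i' => ih (2*k+2) (by omega) (2*k+2+i') (by omega)) z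
  have htop : T = ⊤ := by
    rw [eq_top_iff, ← hMspan, Submodule.span_le]
    rintro _ ⟨i, rfl⟩
    show (Me^i) e ∈ T
    exact hdown (2*n) 0 (by omega) i (Nat.zero_le _)
  have hcard : Fintype.card (Fin n ⊕ Fin n) = Module.finrank F V := by
    simp [hdim, two_mul]
  have hli : LinearIndependent F gfam :=
    linearIndependent_of_top_le_span_of_card_eq_finrank htop.ge hcard
  set L := Submodule.span F (Set.range fun k : Fin n => (Pe^(k:ℕ)) e) with hLdef
  have hliL : LinearIndependent F (fun k : Fin n => (Pe^(k:ℕ)) e) := by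
    have h := hli.comp Sum.inl Sum.inl_injective
    exact h
  have hrankL : Module.finrank F L = n := by
    rw [hLdef, finrank_span_eq_card hliL, Fintype.card_fin]
  have hgenL : ∀ k : Fin n, (Pe^(k:ℕ)) e ∈ L := fun k => Submodule.subset_span ⟨k, rfl⟩
  have hPeL : ∀ x ∈ L, Pe x ∈ L := by
    intro x hx
    have hle : L ≤ L.comap Pe := by
      rw [hLdef, Submodule.span_le]
      rintro _ ⟨k, rfl⟩
      show Pe ((Pe^(k:ℕ)) e) ∈ L
      have hPk : Pe ((Pe^(k:ℕ)) e) = (Pe^((k:ℕ)+1)) e := by rw [pow_succ']; rfl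
      rcases Nat.lt_or_ge ((k:ℕ)+1) n with h | h
      · rw [hPk]; exact hgenL ⟨(k:ℕ)+1, h⟩
      · have hk2 := k.isLt
        have hkn : (k:ℕ)+1 = n := by omega
        rw [hPk, hkn, hPen]
        simpa using L.zero_mem
    exact hle hx
  have hgen2 : ∀ i j : Fin n, s ((Pe^(i:ℕ)) e) ((Pe^(j:ℕ)) e) = 0 := by
    intro i j
    rw [hselfadjk]
    have hij : (Pe^(i:ℕ)) ((Pe^(j:ℕ)) e) = (Pe^((i:ℕ)+(j:ℕ))) e := by rw [pow_add]; rfl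
    rw [hij]
    exact hdiag e _
  have hsingL : ∀ x ∈ L, ∀ y ∈ L, s x y = 0 := by
    have h1 : ∀ i : Fin n, ∀ y ∈ L, s ((Pe^(i:ℕ)) e) y = 0 := by
      intro i y hy
      have hle : L ≤ LinearMap.ker (s ((Pe^(i:ℕ)) e)) := by
        rw [hLdef, Submodule.span_le]
        rintro _ ⟨j, rfl⟩
        simp only [SetLike.mem_coe, LinearMap.mem_ker]
        exact hgen2 i j
      simpa using hle hy
    intro x hx y hy
    have hle : L ≤ LinearMap.ker (s.flip y) := by
      rw [hLdef, Submodule.span_le]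
      rintro _ ⟨i, rfl⟩
      simp only [SetLike.mem_coe, LinearMap.mem_ker, LinearMap.flip_apply]
      exact h1 i y hy
    simpa using hle hx
  have hsum_apply : ∀ v, UU v + W v = η • Pe v + (2:F) • η • v := by
    intro v
    have h := sum_root_zeta η n hη2
    have h2R : (2 : AdjoinRoot (mpoly η n)) * etaR η n
        = algebraMap F (AdjoinRoot (mpoly η n)) (2*η) := by
      rw [etaR, show (2 : AdjoinRoot (mpoly η n)) = algebraMap F _ 2 from
        (map_ofNat _ 2).symm, ← map_mul]
    rw [h2R] at h
    have h' := congrArg (fun r => (φ r) v) h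
    simp only [map_add, map_mul, hφρ, hφη, ← hWdef, ← hPedef, φ.commutes,
      LinearMap.add_apply, Module.End.mul_apply, Module.algebraMap_end_apply] at h'
    exact h'
  have hsymL : ∀ x ∈ L, ∀ y ∈ L, s x (u y) = s y (u x) := by
    intro x hx y hy
    have e1 : s y (UU x) + s x (W y) = 0 := by
      have ha := hadj1 x y
      have hb := hskew (UU x) y
      linear_combination ha + hb
    have e2 : s x (UU y) + s x (W y) = 0 := by
      have h3 : s x (UU y + W y) = s x (UU y) + s x (W y) := map_add _ _ _
      rw [← h3, hsum_apply y]
      simp only [map_add, map_smul, smul_eq_mul]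
      rw [hsingL x hx (Pe y) (hPeL y hy), hsingL x hx y hy]
      ring
    have hxy : s x (UU y) = s y (UU x) := by linear_combination e2 - e1
    rw [← hcoe y, ← hcoe x]
    exact hxy
  have hnondegL : ∀ x ∈ L, (∀ y ∈ L, s x (u y) = 0) → x = 0 := by
    intro x hx hxy
    refine hnd x fun y => ?_
    have hyT : y ∈ T := htop.symm ▸ Submodule.mem_top
    have hle : T ≤ LinearMap.ker (s x) := by
      rw [hTdef, Submodule.span_le]
      rintro _ ⟨i, rfl⟩
      simp only [SetLike.mem_coe, LinearMap.mem_ker]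
      rcases i with k | k
      · show s x (gfam (Sum.inl k)) = 0
        exact hsingL x hx _ (hgenL k)
      · show s x (gfam (Sum.inr k)) = 0
        have hm : gfam (Sum.inr k) = UU ((Pe^(k:ℕ)) e) - η • ((Pe^(k:ℕ)) e) := by
          show Me ((Pe^(k:ℕ)) e) = _
          exact hMe_apply _
        rw [hm, map_sub, map_smul]
        have hA : s x (UU ((Pe^(k:ℕ)) e)) = 0 := by
          rw [hcoe]; exact hxy _ (hgenL k)
        rw [hA, hsingL x hx _ (hgenL k)]
        simp
    simpa using hle hyT
  refine ⟨L, hsingL, ?_, hsymL, hnondegL⟩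
  rw [hrankL, hdim]
end

section
/- Let F be a field of characteristic not 2 and let λ ∈ F with λ ≠ 0, λ ≠ 1 and λ ≠ -1. Let V be a 2n-dimensional F-vector space with a symplectic form s and let u ∈ Sp(s) satisfy (u - λ·id) ∘ (u - λ⁻¹·id) = 0. Let b be a nondegenerate symmetric bilinear form on the space F^n. Then there exist a Lagrangian L of (V, s) and a linear isomorphism φ : F^n → L such that s(φ x, u(φ y)) = b(x, y) for all x, y ∈ F^n (i.e., the bilinear form s_{u,L} : (x, y) ↦ s(x, u y) on L is equivalent to b). -/
/-!
Since `λ² ≠ 1`, the eigenvalues `λ` and `λ⁻¹` are distinct, so `V = A ⊕ B` with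
`A = ker (u - λ)` and `B = ker (u - λ⁻¹)`. As `u` preserves `s` and `λ², λ⁻² ≠ 1`, both
eigenspaces are isotropic, hence `s` is a perfect pairing between them and `dim A = dim B = n`.
Identify `F^n` with `A` and take `T : A → B` with `s(x, T y) = b(x, y) / (λ⁻¹ - λ)`. Since `b` is
symmetric, the graph `{x + T x}` of `T` is isotropic of dimension `n`, i.e. a Lagrangian, and
`s(x + T x, u (y + T y)) = λ⁻¹ s(x, T y) + λ s(T x, y) = (λ⁻¹ - λ) s(x, T y) = b(x, y)`.
-/

open Module

theorem Module.End.isCompl_eigenspace_of_sub_comp_sub_eq_zero {K M : Type*} [Field K]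
    [AddCommGroup M] [Module K M] {f : End K M} {a b : K} (hab : a ≠ b)
    (h : (f - a • LinearMap.id) ∘ₗ (f - b • LinearMap.id) = 0) :
    IsCompl (f.eigenspace a) (f.eigenspace b) := by
  refine ⟨f.disjoint_genEigenspace hab 1 1, Submodule.codisjoint_iff_exists_add_eq.mpr fun v ↦ ?_⟩
  have hv : f (f v) = (a + b) • f v - (a * b) • v := by
    have := LinearMap.congr_fun h v
    simp only [LinearMap.comp_apply, LinearMap.sub_apply, LinearMap.smul_apply,
      LinearMap.id_apply, LinearMap.zero_apply, map_sub, map_smul] at this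
    linear_combination (norm := module) this
  have hab' : a - b ≠ 0 := sub_ne_zero.mpr hab
  -- Lagrange interpolation: `(f - b) / (a - b)` and `(f - a) / (b - a)` are the projections.
  refine ⟨(a - b)⁻¹ • (f v - b • v), (b - a)⁻¹ • (f v - a • v), ?_, ?_, ?_⟩
  · rw [mem_eigenspace_iff, map_smul, map_sub, map_smul, hv]
    module
  · rw [mem_eigenspace_iff, map_smul, map_sub, map_smul, hv]
    module
  · match_scalars <;> field_simp <;> ring

theorem LinearMap.apply_eq_zero_of_mem_eigenspace_of_mul_ne_one {R M : Type*}
    [CommRing R] [NoZeroDivisors R] [AddCommGroup M] [Module R M] {s : M →ₗ[R] M →ₗ[R] R}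
    {u : End R M} (hu : ∀ x y, s (u x) (u y) = s x y) {α β : R} (hαβ : α * β ≠ 1) {x y : M}
    (hx : x ∈ u.eigenspace α) (hy : y ∈ u.eigenspace β) : s x y = 0 := by
  have h := hu x y
  rw [End.mem_eigenspace_iff.mp hx, End.mem_eigenspace_iff.mp hy, map_smul, map_smul,
    LinearMap.smul_apply, smul_eq_mul, smul_eq_mul] at h
  have : (α * β - 1) * s x y = 0 := by linear_combination h
  exact (mul_eq_zero.mp this).resolve_left (sub_ne_zero.mpr hαβ)

theorem LinearMap.exists_compl₂_eq_of_isPerfPair {R M N : Type*} [CommRing R]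
    [AddCommGroup M] [Module R M] [AddCommGroup N] [Module R N] (p : M →ₗ[R] N →ₗ[R] R)
    [p.IsPerfPair] (β : M →ₗ[R] M →ₗ[R] R) : ∃ T : M →ₗ[R] N, p.compl₂ T = β :=
  ⟨(p.flip.toPerfPair.symm : Dual R M →ₗ[R] N) ∘ₗ β.flip, by ext; simp⟩

section IsotropicComplements

variable {K V : Type*} [Field K] [AddCommGroup V] [Module K V] {s : V →ₗ[K] V →ₗ[K] K}
  {A B : Submodule K V}

theorem LinearMap.SeparatingLeft.eq_zero_of_codisjoint (hs : s.SeparatingLeft)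
    (hAB : Codisjoint A B) {x : V} (hxA : ∀ a ∈ A, s x a = 0) (hxB : ∀ c ∈ B, s x c = 0) :
    x = 0 := by
  refine hs x fun v ↦ ?_
  obtain ⟨a, c, ha, hc, rfl⟩ := Submodule.codisjoint_iff_exists_add_eq.mp hAB v
  rw [map_add, hxA a ha, hxB c hc, add_zero]

theorem LinearMap.IsRefl.isPerfPair_domRestrict₁₂ [FiniteDimensional K V] (hs : s.IsRefl)
    (hnd : s.SeparatingLeft) (hAB : Codisjoint A B) (hA : ∀ x ∈ A, ∀ y ∈ A, s x y = 0)
    (hB : ∀ x ∈ B, ∀ y ∈ B, s x y = 0) : (s.domRestrict₁₂ A B).IsPerfPair := by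
  refine .of_injective (injective_iff_map_eq_zero _ |>.mpr fun x hx ↦ ?_)
    (injective_iff_map_eq_zero _ |>.mpr fun y hy ↦ ?_)
  · refine Subtype.ext (hnd.eq_zero_of_codisjoint hAB (hA x x.2) fun c hc ↦ ?_)
    exact LinearMap.congr_fun hx ⟨c, hc⟩
  · refine Subtype.ext (hnd.eq_zero_of_codisjoint hAB (fun a ha ↦ hs _ _ ?_) (hB y y.2))
    exact LinearMap.congr_fun hy ⟨a, ha⟩

variable (T : A →ₗ[K] B)

def graphMap : A →ₗ[K] V := A.subtype + B.subtype ∘ₗ T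

@[simp]
theorem graphMap_apply (x : A) : graphMap T x = x + T x := rfl

theorem graphMap_injective (hAB : Disjoint A B) : Function.Injective (graphMap T) := by
  refine injective_iff_map_eq_zero _ |>.mpr fun x hx ↦ Subtype.ext ?_
  rw [graphMap_apply, add_eq_zero_iff_eq_neg] at hx
  exact (Submodule.disjoint_def.mp hAB) _ x.2 (hx ▸ B.neg_mem (T x).2)

variable {T}

theorem apply_graphMap_graphMap_eq_zero (hs : s.IsAlt) (hA : ∀ x ∈ A, ∀ y ∈ A, s x y = 0)
    (hB : ∀ x ∈ B, ∀ y ∈ B, s x y = 0) (hT : ∀ x y : A, s x (T y) = s y (T x)) (x y : A) :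
    s (graphMap T x) (graphMap T y) = 0 := by
  simp only [graphMap_apply, map_add, LinearMap.add_apply, hA x x.2 y y.2,
    hB _ (T x).2 _ (T y).2, ← hs.neg (T x : V) y, hT x y]
  ring

theorem apply_graphMap_map_graphMap (hs : s.IsAlt) (hA : ∀ x ∈ A, ∀ y ∈ A, s x y = 0)
    (hB : ∀ x ∈ B, ∀ y ∈ B, s x y = 0) (hT : ∀ x y : A, s x (T y) = s y (T x))
    {u : Module.End K V} {α β : K} (huA : A ≤ u.eigenspace α) (huB : B ≤ u.eigenspace β)
    (x y : A) : s (graphMap T x) (u (graphMap T y)) = (β - α) * s x (T y) := by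
  rw [graphMap_apply, graphMap_apply, map_add u, End.mem_eigenspace_iff.mp (huA y.2),
    End.mem_eigenspace_iff.mp (huB (T y).2)]
  simp only [map_add, map_smul, LinearMap.add_apply, smul_eq_mul, hA x x.2 y y.2,
    hB _ (T x).2 _ (T y).2, ← hs.neg (T x : V) y, hT x y]
  ring

end IsotropicComplements

theorem exists_lagrangian_with_prescribed_symmetric_form_general
    (F : Type*) [Field F]
    (lam : F) (hlam0 : lam ≠ 0) (hlam1 : lam ≠ 1) (hlam2 : lam ≠ -1)
    (n : ℕ)
    (V : Type*) [AddCommGroup V] [Module F V] [FiniteDimensional F V]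
    (hdim : Module.finrank F V = 2 * n)
    (s : V →ₗ[F] V →ₗ[F] F)
    (halt : ∀ x, s x x = 0)
    (hnd : ∀ x, (∀ y, s x y = 0) → x = 0)
    (u : V ≃ₗ[F] V)
    (hu : ∀ x y, s (u x) (u y) = s x y)
    (hann : ((u : V →ₗ[F] V) - lam • LinearMap.id) ∘ₗ
      ((u : V →ₗ[F] V) - lam⁻¹ • LinearMap.id) = 0)
    (b : (Fin n → F) →ₗ[F] (Fin n → F) →ₗ[F] F)
    (hbsymm : ∀ x y, b x y = b y x) :
    ∃ L : Submodule F V,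
      (∀ x ∈ L, ∀ y ∈ L, s x y = 0) ∧
      2 * Module.finrank F L = Module.finrank F V ∧
      ∃ φ : (Fin n → F) ≃ₗ[F] L,
        ∀ x y : Fin n → F, s (φ x : V) (u (φ y : V)) = b x y := by
  have hsq : lam * lam ≠ 1 := fun h ↦ (mul_self_eq_one_iff.mp h).elim hlam1 hlam2
  have hsq_inv : lam⁻¹ * lam⁻¹ ≠ 1 := by rwa [← mul_inv, inv_ne_one]
  have hne : lam ≠ lam⁻¹ := fun h ↦ hsq (by rw [← mul_inv_cancel₀ hlam0, ← h])
  set A := Module.End.eigenspace (u : V →ₗ[F] V) lam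
  set B := Module.End.eigenspace (u : V →ₗ[F] V) lam⁻¹
  have hAB : IsCompl A B := Module.End.isCompl_eigenspace_of_sub_comp_sub_eq_zero hne hann
  have hA : ∀ x ∈ A, ∀ y ∈ A, s x y = 0 := fun x hx y hy ↦
    s.apply_eq_zero_of_mem_eigenspace_of_mul_ne_one hu hsq hx hy
  have hB : ∀ x ∈ B, ∀ y ∈ B, s x y = 0 := fun x hx y hy ↦
    s.apply_eq_zero_of_mem_eigenspace_of_mul_ne_one hu hsq_inv hx hy
  have hs : s.IsAlt := halt
  have := hs.isRefl.isPerfPair_domRestrict₁₂ hnd hAB.codisjoint hA hB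
  have hdimA : Module.finrank F A = n := by
    have := Submodule.finrank_add_eq_of_isCompl hAB
    rw [← Module.finrank_of_isPerfPair (s.domRestrict₁₂ A B)] at this
    omega
  let e : (Fin n → F) ≃ₗ[F] A := .ofFinrankEq _ _ (by simp [hdimA])
  obtain ⟨T, hT⟩ := (s.domRestrict₁₂ A B).exists_compl₂_eq_of_isPerfPair
    ((lam⁻¹ - lam)⁻¹ • b.compl₁₂ (e.symm : A →ₗ[F] _) e.symm)
  replace hT (x y : A) : s x (T y) = (lam⁻¹ - lam)⁻¹ * b (e.symm x) (e.symm y) := by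
    simpa [LinearMap.domRestrict₁₂_apply] using LinearMap.congr_fun₂ hT x y
  have hTsymm : ∀ x y : A, s x (T y) = s y (T x) := fun x y ↦ by rw [hT, hT, hbsymm]
  have hinj := graphMap_injective T hAB.disjoint
  refine ⟨LinearMap.range (graphMap T), ?_, ?_, e.trans (.ofInjective _ hinj), fun x y ↦ ?_⟩
  · rintro _ ⟨x, rfl⟩ _ ⟨y, rfl⟩
    exact apply_graphMap_graphMap_eq_zero hs hA hB hTsymm x y
  · rw [LinearMap.finrank_range_of_inj hinj, hdimA, hdim]
  · have hsub : lam⁻¹ - lam ≠ 0 := sub_ne_zero.mpr hne.symm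
    calc s (graphMap T (e x)) ((u : V →ₗ[F] V) (graphMap T (e y)))
        = (lam⁻¹ - lam) * s (e x) (T (e y)) :=
          apply_graphMap_map_graphMap hs hA hB hTsymm le_rfl le_rfl _ _
      _ = b x y := by rw [hT]; simp [hsub]

/-- Let `F` be a field of characteristic not 2 and `λ ∈ F \ {0, 1, -1}`. Let `(V, s)` be
a `2n`-dimensional symplectic space over `F` and `u ∈ Sp(s)` annihilated by
`(t - λ)(t - λ⁻¹)`. Let `b` be a nondegenerate symmetric bilinear form on `F^n`. Then
there exist a Lagrangian `L` of `(V, s)` and a linear isomorphism `φ : F^n → L` such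
that `s(φ x, u (φ y)) = b(x, y)` for all `x, y`, i.e. the form `(x, y) ↦ s(x, u y)` on
`L` is equivalent to `b`. -/
theorem exists_lagrangian_with_prescribed_symmetric_form
    (F : Type*) [Field F] (hF : ringChar F ≠ 2)
    (lam : F) (hlam0 : lam ≠ 0) (hlam1 : lam ≠ 1) (hlam2 : lam ≠ -1)
    (n : ℕ)
    (V : Type*) [AddCommGroup V] [Module F V] [FiniteDimensional F V]
    (hdim : Module.finrank F V = 2 * n)
    (s : V →ₗ[F] V →ₗ[F] F)
    (halt : ∀ x, s x x = 0)
    (hnd : ∀ x, (∀ y, s x y = 0) → x = 0)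
    (u : V ≃ₗ[F] V)
    (hu : ∀ x y, s (u x) (u y) = s x y)
    (hann : ((u : V →ₗ[F] V) - lam • LinearMap.id) ∘ₗ
      ((u : V →ₗ[F] V) - lam⁻¹ • LinearMap.id) = 0)
    (b : (Fin n → F) →ₗ[F] (Fin n → F) →ₗ[F] F)
    (hbsymm : ∀ x y, b x y = b y x)
    (hbnd : ∀ x, (∀ y, b x y = 0) → x = 0) :
    ∃ L : Submodule F V,
      (∀ x ∈ L, ∀ y ∈ L, s x y = 0) ∧
      2 * Module.finrank F L = Module.finrank F V ∧
      ∃ φ : (Fin n → F) ≃ₗ[F] L,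
        ∀ x y : Fin n → F, s (φ x : V) (u (φ y : V)) = b x y :=
  exists_lagrangian_with_prescribed_symmetric_form_general F lam hlam0 hlam1 hlam2 n V hdim s halt
    hnd u hu hann b hbsymm
end

section
/- Let F be a field with exactly 3 elements. Let V be a 2n-dimensional F-vector space with a symplectic form s and let u ∈ Sp(s) satisfy u ∘ u = -id (u is annihilated by t^2 + 1). Let b be a nondegenerate symmetric bilinear form on the space F^n. Then there exist a Lagrangian L of (V, s) and a linear isomorphism φ : F^n → L such that s(φ x, u(φ y)) = b(x, y) for all x, y ∈ F^n (i.e., the bilinear form s_{u,L} : (x, y) ↦ s(x, u y) on L is equivalent to b). -/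
open Module LinearMap

universe u v

/-- Key induction: construct a "Lagrangian-with-prescribed-diagonal" family. -/
lemma key_family (F : Type u) [Field F]
    (h2 : (2:F) ≠ 0) (hpm : ∀ t : F, t ≠ 0 → t = 1 ∨ t = -1) (h11 : (1:F) + 1 = -1)
    (n : ℕ) :
    ∀ (V : Type v) [AddCommGroup V] [Module F V] [FiniteDimensional F V],
      Module.finrank F V = 2 * n →
      ∀ (s : V →ₗ[F] V →ₗ[F] F), (∀ x, s x x = 0) → (∀ x, (∀ y, s x y = 0) → x = 0) →
      ∀ (u : V →ₗ[F] V), (∀ x y, s (u x) (u y) = s x y) → (∀ x, u (u x) = -x) →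
      ∀ (d : Fin n → F), (∀ i, d i ≠ 0) →
      ∃ v : Fin n → V, (∀ i j, s (v i) (v j) = 0) ∧
        (∀ i j, s (v i) (u (v j)) = if i = j then d i else 0) := by
  induction n with
  | zero =>
    intro V _ _ _ _ s _ _ u _ _ d _
    exact ⟨fun i => i.elim0, fun i => i.elim0, fun i => i.elim0⟩
  | succ n ih =>
    intro V _ _ _ hdim s halt hnd u hu hq d hd
    -- antisymmetry
    have hanti : ∀ x y : V, s x y = - s y x := by
      intro x y
      have h := halt (x + y)
      simp only [map_add, LinearMap.add_apply] at h
      rw [halt, halt] at h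
      linear_combination h
    -- symmetry of h(x,y) = s x (u y)
    have hsymm : ∀ x y : V, s y (u x) = s x (u y) := by
      intro x y
      rw [← hu y (u x), hq]
      rw [show s (u y) (-x) = - s (u y) x by simp]
      rw [hanti x (u y)]
    -- existence of anisotropic vector
    have hexa : ∃ x : V, s x (u x) ≠ 0 := by
      by_contra hcon
      push_neg at hcon
      have hzero : ∀ x y : V, s x (u y) = 0 := by
        intro x y
        have h := hcon (x + y)
        simp only [map_add, LinearMap.add_apply] at h
        rw [hcon, hcon, hsymm x y] at h
        have h2' : (2:F) * s x (u y) = 0 := by linear_combination h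
        exact (mul_eq_zero.mp h2').resolve_left h2
      have : ∀ x : V, x = 0 := by
        intro x
        apply hnd
        intro y
        have : u (u (-y)) = y := by rw [hq]; simp
        rw [← this]
        exact hzero x (u (-y))
      have hsub : Subsingleton V := ⟨fun a b => by rw [this a, this b]⟩
      rw [Module.finrank_zero_of_subsingleton] at hdim
      omega
    obtain ⟨x, hx⟩ := hexa
    set c := s x (u x) with hc
    -- adjust to get s w (u w) = d 0
    have hw : ∃ w : V, s w (u w) = d 0 := by
      rcases hpm (d 0 * c⁻¹) (mul_ne_zero (hd 0) (inv_ne_zero hx)) with h1 | h1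
      · refine ⟨x, ?_⟩
        have hd0 : d 0 = c := by field_simp [hx] at h1; exact h1
        rw [← hc, hd0]
      · refine ⟨x + u x, ?_⟩
        have hd0 : d 0 = -c := by field_simp [hx] at h1; linear_combination h1
        have e0 : u (x + u x) = u x - x := by rw [map_add, hq, ← sub_eq_add_neg]
        have hd0' : d 0 = -(s x (u x)) := by rw [hd0, hc]
        rw [e0]
        simp only [map_add, map_sub, LinearMap.add_apply, LinearMap.sub_apply]
        linear_combination hu x x - hanti (u x) x - hd0' + (s x (u x)) * h11
    obtain ⟨w, hw⟩ := hw
    have hw0 : s w (u w) ≠ 0 := hw ▸ hd 0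
    -- the complement W
    set f : V →ₗ[F] F × F := LinearMap.prod (s.flip w) (s.flip (u w)) with hf
    set W : Submodule F V := LinearMap.ker f with hWdef
    have hmemW : ∀ z : V, z ∈ W ↔ s z w = 0 ∧ s z (u w) = 0 := by
      intro z
      rw [hWdef, LinearMap.mem_ker, hf]
      constructor
      · intro h
        exact ⟨congrArg Prod.fst h, congrArg Prod.snd h⟩
      · intro ⟨h1, h2⟩
        simp [LinearMap.prod_apply, LinearMap.flip_apply, h1, h2]
    -- surjectivity of f
    have hfsurj : LinearMap.range f = ⊤ := by
      rw [eq_top_iff]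
      rintro ⟨a, bb⟩ -
      refine ⟨(bb / (d 0)) • w - (a / (d 0)) • u w, ?_⟩
      have hfw : f w = (0, d 0) := by
        simp [hf, LinearMap.prod_apply, LinearMap.flip_apply, halt, hw]
      have hfuw : f (u w) = (-(d 0), 0) := by
        simp [hf, LinearMap.prod_apply, LinearMap.flip_apply, halt, hanti (u w) w, hw]
      rw [map_sub, map_smul, map_smul, hfw, hfuw]
      ext
      · simp [div_mul_cancel₀ _ (hd 0)]
      · simp [div_mul_cancel₀ _ (hd 0)]
    have hrankW : Module.finrank F W = 2 * n := by
      have h1 := LinearMap.finrank_range_add_finrank_ker f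
      rw [hfsurj, finrank_top] at h1
      have h2 : Module.finrank F (F × F) = 2 := by
        simp [Module.finrank_prod]
      rw [h2, hdim] at h1
      rw [hWdef]
      omega
    -- u maps W to W
    have humem : ∀ z ∈ W, u z ∈ W := by
      intro z hz
      rw [hmemW] at hz ⊢
      obtain ⟨hz1, hz2⟩ := hz
      constructor
      · have : s (u z) w = - s (u z) (u (u w)) := by rw [hq]; simp
        rw [this, hu, hz2, neg_zero]
      · rw [hu]; exact hz1
    -- restricted structures
    set u' : W →ₗ[F] W := u.restrict humem with hu'def
    set s' : W →ₗ[F] W →ₗ[F] F := s.compl₁₂ W.subtype W.subtype with hs'def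
    have hs'app : ∀ z y : W, s' z y = s (z : V) (y : V) := fun z y => rfl
    have hu'app : ∀ z : W, (u' z : V) = u (z : V) := fun z => rfl
    have halt' : ∀ z : W, s' z z = 0 := fun z => halt _
    have hnd' : ∀ z : W, (∀ y : W, s' z y = 0) → z = 0 := by
      intro z hz
      have hzw : s (z:V) w = 0 := ((hmemW _).mp z.2).1
      have hzuw : s (z:V) (u w) = 0 := ((hmemW _).mp z.2).2
      have : (z : V) = 0 := by
        apply hnd
        intro y
        set α := s y (u w) / (d 0) with hα
        set β := -(s y w) / (d 0) with hβ
        have hy' : y - α • w - β • u w ∈ W := by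
          rw [hmemW]
          constructor
          · simp only [map_sub, map_smul, LinearMap.sub_apply, LinearMap.smul_apply]
            rw [halt, hanti (u w) w, hw, hβ]
            simp only [smul_eq_mul, mul_zero, sub_zero]
            rw [neg_div, neg_mul_neg, div_mul_cancel₀ _ (hd 0), sub_self]
          · simp only [map_sub, map_smul, LinearMap.sub_apply, LinearMap.smul_apply]
            rw [hw, halt, hα]
            simp only [smul_eq_mul, mul_zero, sub_zero, div_mul_cancel₀ _ (hd 0), sub_self]
        have h0 := hz ⟨y - α • w - β • u w, hy'⟩
        rw [hs'app] at h0
        simp only [map_sub, map_smul, smul_eq_mul] at h0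
        rw [hzw, hzuw] at h0
        simpa using h0
      exact Subtype.ext this
    have hu'' : ∀ z y : W, s' (u' z) (u' y) = s' z y := by
      intro z y
      rw [hs'app, hs'app, hu'app, hu'app, hu]
    have hq' : ∀ z : W, u' (u' z) = -z := by
      intro z
      apply Subtype.ext
      rw [hu'app, hu'app, hq]
      rfl
    obtain ⟨v', hv'1, hv'2⟩ := ih W hrankW s' halt' hnd' u' hu'' hq' (d ∘ Fin.succ)
      (fun i => hd i.succ)
    refine ⟨Fin.cons w (fun i => (v' i : V)), ?_, ?_⟩
    · intro i j
      refine Fin.cases ?_ (fun i => ?_) i <;> refine Fin.cases ?_ (fun j => ?_) j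
      · simp [halt]
      · simp only [Fin.cons_zero, Fin.cons_succ]
        rw [hanti]
        rw [((hmemW _).mp (v' j).2).1, neg_zero]
      · simp only [Fin.cons_zero, Fin.cons_succ]
        exact ((hmemW _).mp (v' i).2).1
      · simp only [Fin.cons_succ]
        have := hv'1 i j
        rw [hs'app] at this
        exact this
    · intro i j
      refine Fin.cases ?_ (fun i => ?_) i <;> refine Fin.cases ?_ (fun j => ?_) j
      · simpa using hw
      · simp only [Fin.cons_zero, Fin.cons_succ]
        rw [hanti, ((hmemW _).mp (humem _ (v' j).2)).1, neg_zero,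
          if_neg (Fin.succ_ne_zero j).symm]
      · simp only [Fin.cons_zero, Fin.cons_succ]
        rw [((hmemW _).mp (v' i).2).2, if_neg (Fin.succ_ne_zero i)]
      · simp only [Fin.cons_succ]
        have := hv'2 i j
        rw [hs'app, hu'app] at this
        rw [this]
        by_cases hij : i = j
        · subst hij; simp
        · rw [if_neg hij, if_neg (fun h => hij (Fin.succ_injective _ h))]

/-- Let `F` be the field with 3 elements. Let `(V, s)` be a `2n`-dimensional symplectic
space over `F` and `u ∈ Sp(s)` with `u ∘ u = -id` (annihilated by `t² + 1`). Let `b` be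
a nondegenerate symmetric bilinear form on `F^n`. Then there exist a Lagrangian `L` of
`(V, s)` and a linear isomorphism `φ : F^n → L` such that `s(φ x, u (φ y)) = b(x, y)`
for all `x, y`, i.e. the form `(x, y) ↦ s(x, u y)` on `L` is equivalent to `b`. -/
theorem exists_lagrangian_with_prescribed_symmetric_form_F3
    (F : Type*) [Field F] (hcard : Nat.card F = 3)
    (n : ℕ)
    (V : Type*) [AddCommGroup V] [Module F V] [FiniteDimensional F V]
    (hdim : Module.finrank F V = 2 * n)
    (s : V →ₗ[F] V →ₗ[F] F)
    (halt : ∀ x, s x x = 0)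
    (hnd : ∀ x, (∀ y, s x y = 0) → x = 0)
    (u : V ≃ₗ[F] V)
    (hu : ∀ x y, s (u x) (u y) = s x y)
    (hquarter : ∀ x, u (u x) = -x)
    (b : (Fin n → F) →ₗ[F] (Fin n → F) →ₗ[F] F)
    (hbsymm : ∀ x y, b x y = b y x)
    (hbnd : ∀ x, (∀ y, b x y = 0) → x = 0) :
    ∃ L : Submodule F V,
      (∀ x ∈ L, ∀ y ∈ L, s x y = 0) ∧
      2 * Module.finrank F L = Module.finrank F V ∧
      ∃ φ : (Fin n → F) ≃ₗ[F] L,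
        ∀ x y : Fin n → F, s (φ x : V) (u (φ y : V)) = b x y := by
  -- facts about the field with 3 elements
  have hfin : Finite F := Nat.finite_of_card_ne_zero (by rw [hcard]; norm_num)
  have : Fintype F := Fintype.ofFinite F
  have hcard' : Fintype.card F = 3 := by rw [← Nat.card_eq_fintype_card, hcard]
  have h3 : (3 : F) = 0 := by
    have := FiniteField.cast_card_eq_zero F
    rwa [hcard'] at this
    
  have h11 : (1:F) + 1 = -1 := by linear_combination h3
  have h2 : (2:F) ≠ 0 := by
    intro h
    have : (1:F) = 0 := by linear_combination h3 - h
    exact one_ne_zero this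
  have hpm : ∀ t : F, t ≠ 0 → t = 1 ∨ t = -1 := by
    intro t ht
    have := FiniteField.pow_card_sub_one_eq_one t ht
    rw [hcard'] at this
    have h1 : t * t = 1 := by
      have : t ^ 2 = 1 := this
      linear_combination this
    exact mul_self_eq_one_iff.mp h1
  -- diagonalize b
  have hinv2 : Invertible (2 : F) := ⟨2, by linear_combination h3, by linear_combination h3⟩
  have hbsymm' : b.IsSymm := ⟨fun x y => by simpa using hbsymm x y⟩
  obtain ⟨v₀, hv₀⟩ := LinearMap.BilinForm.exists_orthogonal_basis hbsymm'
  have hfr : Module.finrank F (Fin n → F) = n := Module.finrank_fin_fun F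
  set e : Basis (Fin n) F (Fin n → F) := v₀.reindex (finCongr hfr) with he
  have heo : ∀ i j : Fin n, i ≠ j → b (e i) (e j) = 0 := by
    intro i j hij
    rw [he, Basis.reindex_apply, Basis.reindex_apply]
    exact hv₀ (fun h => hij (by simpa using congrArg (finCongr hfr) h))
  set d : Fin n → F := fun i => b (e i) (e i) with hdd
  have hdne : ∀ i, d i ≠ 0 := by
    intro i hi
    have hbe : b (e i) = 0 := by
      apply e.ext
      intro j
      by_cases hij : i = j
      · subst hij; simpa [hdd] using hi
      · simpa using heo i j hij
    have : e i = 0 := hbnd _ (fun y => by rw [hbe]; rfl)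
    exact Basis.ne_zero e i this
  -- apply the key construction
  obtain ⟨v, hv1, hv2⟩ := key_family F h2 hpm h11 n V hdim s halt hnd u.toLinearMap
    (fun x y => hu x y) (fun x => hquarter x) d hdne
  set ψ : (Fin n → F) →ₗ[F] V := Basis.constr e F v with hψ
  have hψe : ∀ i, ψ (e i) = v i := fun i => e.constr_basis F v i
  have claimA : s.compl₁₂ ψ ψ = 0 := by
    apply e.ext; intro i; apply e.ext; intro j
    simp [LinearMap.compl₁₂_apply, hψe, hv1]
  have claimB : s.compl₁₂ ψ (u.toLinearMap ∘ₗ ψ) = b := by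
    apply e.ext; intro i; apply e.ext; intro j
    have h' := hv2 i j
    simp only [LinearEquiv.coe_coe] at h'
    simp only [LinearMap.compl₁₂_apply, LinearMap.comp_apply, hψe, LinearEquiv.coe_coe,
      LinearMap.zero_apply]
    rw [h']
    by_cases hij : i = j
    · subst hij; simp [hdd]
    · rw [if_neg hij, heo i j hij]
  have hinj : Function.Injective ψ := by
    rw [← LinearMap.ker_eq_bot]
    apply (Submodule.eq_bot_iff _).mpr
    intro a ha
    rw [LinearMap.mem_ker] at ha
    have hba : b a = 0 := by
      apply e.ext
      intro j
      have h' : s (ψ a) (u (ψ (e j))) = b a (e j) := by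
        have := LinearMap.congr_fun (LinearMap.congr_fun claimB a) (e j)
        simpa [LinearMap.compl₁₂_apply] using this
      rw [LinearMap.zero_apply, ← h', ha]
      simp
    exact hbnd a (fun y => by rw [hba]; rfl)
  refine ⟨LinearMap.range ψ, ?_, ?_, ?_⟩
  · rintro x ⟨a, rfl⟩ y ⟨cc, rfl⟩
    have := LinearMap.congr_fun (LinearMap.congr_fun claimA a) cc
    simpa [LinearMap.compl₁₂_apply] using this
  · rw [LinearMap.finrank_range_of_inj hinj, hfr, hdim]
  · refine ⟨LinearEquiv.ofInjective ψ hinj, ?_⟩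
    intro x y
    have h1 : ((LinearEquiv.ofInjective ψ hinj x : LinearMap.range ψ) : V) = ψ x :=
      rfl
    have h2 : ((LinearEquiv.ofInjective ψ hinj y : LinearMap.range ψ) : V) = ψ y :=
      rfl
    rw [h1, h2]
    have := LinearMap.congr_fun (LinearMap.congr_fun claimB x) y
    simpa [LinearMap.compl₁₂_apply] using this
end

section
/- Let F be a field of characteristic not 2 and let λ ∈ F with λ ≠ 0, λ ≠ 1 and λ ≠ -1. Let A be a 2-by-2 matrix over F with det A = 1 that is not a scalar multiple of the identity (i.e., A is cyclic). Then there exist 2-by-2 matrices B and C over F with A = B*C, det B = 1, trace B = λ + λ⁻¹, det C = 1, and trace C = λ + λ⁻¹ (so B and C are both cyclic with minimal polynomial (X - λ)(X - λ⁻¹)). -/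
private lemma aux_sl2 {F : Type*} [Field F] (A : Matrix (Fin 2) (Fin 2) F)
    (p q r u s : F)
    (hdet : A 0 0 * A 1 1 - A 0 1 * A 1 0 = 1)
    (hB : p * u - q * r = 1) (htrB : p + u = s)
    (htrC : u * A 0 0 - q * A 1 0 - r * A 0 1 + p * A 1 1 = s) :
    ∃ B C : Matrix (Fin 2) (Fin 2) F,
      A = B * C ∧ B.det = 1 ∧ B.trace = s ∧ C.det = 1 ∧ C.trace = s := by
  refine ⟨!![p, q; r, u],
    !![u * A 0 0 - q * A 1 0, u * A 0 1 - q * A 1 1;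
       -(r * A 0 0) + p * A 1 0, -(r * A 0 1) + p * A 1 1], ?_, ?_, ?_, ?_, ?_⟩
  · ext i j
    fin_cases i <;> fin_cases j <;>
      simp [Matrix.mul_apply, Fin.sum_univ_two] <;>
      first
        | linear_combination (-(A 0 0)) * hB
        | linear_combination (-(A 0 1)) * hB
        | linear_combination (-(A 1 0)) * hB
        | linear_combination (-(A 1 1)) * hB
  · simp [Matrix.det_fin_two]; linear_combination hB
  · simp [Matrix.trace_fin_two]; linear_combination htrB
  · simp [Matrix.det_fin_two]; linear_combination (p*u - q*r) * hdet + hB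
  · simp [Matrix.trace_fin_two]; linear_combination htrC

/-- Let `F` be a field of characteristic not 2 and `λ ∈ F \ {0, 1, -1}`. Every 2×2
matrix `A` over `F` with `det A = 1` that is not a scalar multiple of the identity
(i.e. is cyclic) is a product `A = B·C` of two matrices with determinant 1 and trace
`λ + λ⁻¹` (so both cyclic with minimal polynomial `(X - λ)(X - λ⁻¹)`). -/
theorem cyclic_sl2_product_of_two_quadratic
    (F : Type*) [Field F] (hF : ringChar F ≠ 2)
    (lam : F) (hlam0 : lam ≠ 0) (hlam1 : lam ≠ 1) (hlam2 : lam ≠ -1)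
    (A : Matrix (Fin 2) (Fin 2) F)
    (hdet : A.det = 1)
    (hcyc : ∀ c : F, A ≠ c • (1 : Matrix (Fin 2) (Fin 2) F)) :
    ∃ B C : Matrix (Fin 2) (Fin 2) F,
      A = B * C ∧
      B.det = 1 ∧ B.trace = lam + lam⁻¹ ∧
      C.det = 1 ∧ C.trace = lam + lam⁻¹ := by
  set s := lam + lam⁻¹ with hs
  have ha : A 0 0 * A 1 1 - A 0 1 * A 1 0 = 1 := by
    rw [← hdet, Matrix.det_fin_two]
  by_cases hb : A 0 1 ≠ 0
  · refine aux_sl2 A lam 0 ((lam⁻¹ * A 0 0 + lam * A 1 1 - s) / A 0 1) lam⁻¹ s ha ?_ ?_ ?_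
    · field_simp; ring
    · rfl
    · field_simp; ring
  by_cases hc : A 1 0 ≠ 0
  · refine aux_sl2 A lam ((lam⁻¹ * A 0 0 + lam * A 1 1 - s) / A 1 0) 0 lam⁻¹ s ha ?_ ?_ ?_
    · field_simp; ring
    · rfl
    · field_simp; ring
  push_neg at hb hc
  have had : A 0 0 ≠ A 1 1 := by
    intro h
    exact hcyc (A 0 0) (by ext i j; fin_cases i <;> fin_cases j <;>
      simp [hb, hc, h, Matrix.one_apply])
  have hne : A 0 0 - A 1 1 ≠ 0 := sub_ne_zero.mpr had
  set u := s * (1 - A 1 1) / (A 0 0 - A 1 1) with hu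
  refine aux_sl2 A (s - u) 1 ((s - u) * u - 1) u s ha (by ring) (by ring) ?_
  simp only [hb, hc, mul_zero, sub_zero]
  rw [hu]
  field_simp
  ring
end

section
/- Let F be a field of characteristic not 2, V a finite-dimensional F-vector space with a symplectic form s, L and L' two Lagrangians of (V, s) with L ∩ L' = {0}, and u ∈ Sp(s) such that the bilinear form s_{u,L} : (x, y) ↦ s(x, u y) on L is nondegenerate. Then there exists w ∈ Sp(s) such that, setting u' = w⁻¹ ∘ u ∘ w (a conjugate of u in Sp(s)), one has s(x, u' y) = s(x, u y) for all x, y ∈ L and u'(L) = L'. -/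
/-- The Lagrangian fit lemma. Let `(V, s)` be a finite-dimensional symplectic space
over a field `F` of characteristic not 2, `L` and `L'` transverse Lagrangians of
`(V, s)`, and `u ∈ Sp(s)` such that the bilinear form `(x, y) ↦ s(x, u y)` on `L` is
nondegenerate. Then some conjugate `u' = w⁻¹ ∘ u ∘ w` of `u` in `Sp(s)` satisfies
`s(x, u' y) = s(x, u y)` for all `x, y ∈ L` and `u'(L) = L'`. -/
theorem lagrangian_fit_lemma
    (F : Type*) [Field F] (hF : ringChar F ≠ 2)
    (V : Type*) [AddCommGroup V] [Module F V] [FiniteDimensional F V]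
    (s : V →ₗ[F] V →ₗ[F] F)
    (halt : ∀ x, s x x = 0)
    (hnd : ∀ x, (∀ y, s x y = 0) → x = 0)
    (L L' : Submodule F V)
    (hLsing : ∀ x ∈ L, ∀ y ∈ L, s x y = 0)
    (hL'sing : ∀ x ∈ L', ∀ y ∈ L', s x y = 0)
    (hLdim : 2 * Module.finrank F L = Module.finrank F V)
    (hL'dim : 2 * Module.finrank F L' = Module.finrank F V)
    (htrans : L ⊓ L' = ⊥)
    (u : V ≃ₗ[F] V)
    (hu : ∀ x y, s (u x) (u y) = s x y)
    (hndL : ∀ x ∈ L, (∀ y ∈ L, s x (u y) = 0) → x = 0) :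
    ∃ w : V ≃ₗ[F] V,
      (∀ x y, s (w x) (w y) = s x y) ∧
      (∀ x ∈ L, ∀ y ∈ L, s x (w.symm (u (w y))) = s x (u y)) ∧
      L.map (w.symm.toLinearMap ∘ₗ (u : V →ₗ[F] V) ∘ₗ w.toLinearMap) = L' := by
  classical
  -- antisymmetry
  have hskew : ∀ x y : V, s y x = - s x y := by
    intro x y
    have h := halt (x + y)
    simp only [map_add, LinearMap.add_apply, halt x, halt y] at h
    have : s x y + s y x = 0 := by linear_combination h
    linear_combination this
  -- finrank facts
  have hLL' : Module.finrank F L' = Module.finrank F L := by omega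
  -- M := u(L)
  set M : Submodule F V := L.map (u : V →ₗ[F] V) with hM
  have hmemM : ∀ m, m ∈ M ↔ ∃ y ∈ L, u y = m := by
    intro m; exact Submodule.mem_map
  have hMsing : ∀ x ∈ M, ∀ y ∈ M, s x y = 0 := by
    intro x hx y hy
    obtain ⟨a, ha, rfl⟩ := (hmemM x).1 hx
    obtain ⟨b, hb, rfl⟩ := (hmemM y).1 hy
    rw [hu]; exact hLsing a ha b hb
  have hMdim : Module.finrank F M = Module.finrank F L :=
    LinearEquiv.finrank_map_eq u L
  -- right nondegeneracy of (x,y) ↦ s x (u y) on L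
  have hndR : ∀ y ∈ L, (∀ x ∈ L, s x (u y) = 0) → y = 0 := by
    intro y hy h
    set B : L →ₗ[F] Module.Dual F L :=
      ((s.compl₂ (u : V →ₗ[F] V)).domRestrict₁₂ L L) with hB
    have hBinj : Function.Injective B := by
      rw [← LinearMap.ker_eq_bot, Submodule.eq_bot_iff]
      intro x hx
      have hx0 : ∀ z ∈ L, s (x : V) (u z) = 0 := by
        intro z hz
        have := congrFun (congrArg DFunLike.coe (LinearMap.mem_ker.1 hx)) ⟨z, hz⟩
        simpa [hB, LinearMap.domRestrict₁₂_apply] using this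
      have := hndL (x : V) x.2 hx0
      exact Subtype.ext this
    have hBsurj : Function.Surjective B :=
      (LinearMap.injective_iff_surjective_of_finrank_eq_finrank
        (Subspace.dual_finrank_eq).symm).1 hBinj
    have hy0 : (⟨y, hy⟩ : L) = 0 := by
      rw [← Module.forall_dual_apply_eq_zero_iff F (⟨y, hy⟩ : L)]
      intro φ
      obtain ⟨x, rfl⟩ := hBsurj φ
      simpa [hB, LinearMap.domRestrict₁₂_apply] using h (x : V) x.2
    exact congrArg Subtype.val hy0
  -- M disjoint from L
  have hLM : L ⊓ M = ⊥ := by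
    rw [Submodule.eq_bot_iff]
    intro z ⟨hzL, hzM⟩
    obtain ⟨y, hy, rfl⟩ := (hmemM z).1 hzM
    rw [hndR y hy fun x hx => hLsing x hx _ hzL, map_zero]
  -- sup facts
  have hsup : ∀ P : Submodule F V, Module.finrank F P = Module.finrank F L →
      L ⊓ P = ⊥ → L ⊔ P = ⊤ := by
    intro P hPd hPi
    apply Submodule.eq_top_of_finrank_eq
    have := Submodule.finrank_sup_add_finrank_inf_eq L P
    rw [hPi, finrank_bot, add_zero, hPd] at this
    omega
  have hsupL' : L ⊔ L' = ⊤ := hsup L' hLL' htrans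
  have hsupM : L ⊔ M = ⊤ := hsup M hMdim hLM
  have hcomplL' : IsCompl L L' := ⟨disjoint_iff.mpr htrans, codisjoint_iff.mpr hsupL'⟩
  have hcomplM : IsCompl L M := ⟨disjoint_iff.mpr hLM, codisjoint_iff.mpr hsupM⟩
  -- pairing maps to Dual L
  set Ψ : V →ₗ[F] Module.Dual F L := (s.domRestrict L).flip with hΨ
  have hΨapp : ∀ (v : V) (x : L), Ψ v x = s x v := fun v x => rfl
  have hψbij : ∀ P : Submodule F V, Module.finrank F P = Module.finrank F L →
      (∀ x ∈ P, ∀ y ∈ P, s x y = 0) → L ⊔ P = ⊤ →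
      Function.Bijective (Ψ.domRestrict P) := by
    intro P hPd hPsing hPsup
    have hinj : Function.Injective (Ψ.domRestrict P) := by
      rw [← LinearMap.ker_eq_bot, Submodule.eq_bot_iff]
      intro p hp
      have hp0 : ∀ x ∈ L, s x (p : V) = 0 := by
        intro x hx
        have := congrFun (congrArg DFunLike.coe (LinearMap.mem_ker.1 hp)) ⟨x, hx⟩
        simpa [hΨapp] using this
      have hall : ∀ z : V, s (p : V) z = 0 := by
        intro z
        have hz : z ∈ L ⊔ P := hPsup ▸ Submodule.mem_top
        obtain ⟨a, ha, b, hb, rfl⟩ := Submodule.mem_sup.1 hz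
        rw [map_add]
        rw [hskew a (p : V), hp0 a ha, hPsing _ p.2 b hb]
        ring
      exact Subtype.ext (hnd (p : V) hall)
    refine ⟨hinj, ?_⟩
    exact (LinearMap.injective_iff_surjective_of_finrank_eq_finrank
        (by rw [hPd, Subspace.dual_finrank_eq])).1 hinj
  set ψ1 : L' ≃ₗ[F] Module.Dual F L :=
    LinearEquiv.ofBijective (Ψ.domRestrict L') (hψbij L' hLL' hL'sing hsupL') with hψ1
  set ψ2 : M ≃ₗ[F] Module.Dual F L :=
    LinearEquiv.ofBijective (Ψ.domRestrict M) (hψbij M hMdim hMsing hsupM) with hψ2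
  set g : L' ≃ₗ[F] M := ψ1.trans ψ2.symm with hgdef
  have hg : ∀ (b : L') (x : L), s (x : V) ((g b : M) : V) = s (x : V) (b : V) := by
    intro b x
    have h2 : ψ2 (g b) = ψ1 b := by
      simp [hgdef]
    have := congrFun (congrArg DFunLike.coe h2) x
    simpa [hψ1, hψ2, hΨapp] using this
  -- build w
  set e1 := Submodule.prodEquivOfIsCompl L L' hcomplL' with he1
  set e2 := Submodule.prodEquivOfIsCompl L M hcomplM with he2
  set w : V ≃ₗ[F] V :=
    e1.symm.trans (((LinearEquiv.refl F L).prodCongr g).trans e2) with hwdef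
  have hw : ∀ (a : L) (b : L'), w ((a : V) + (b : V)) = (a : V) + ((g b : M) : V) := by
    intro a b
    have h1 : e1.symm ((a : V) + (b : V)) = (a, b) := by
      rw [LinearEquiv.symm_apply_eq]
      simp [he1, Submodule.coe_prodEquivOfIsCompl']
    simp [hwdef, h1, he2, Submodule.coe_prodEquivOfIsCompl', LinearEquiv.prodCongr_apply]
  have hdecomp : ∀ v : V, ∃ (a : L) (b : L'), v = (a : V) + (b : V) := by
    intro v
    have hv : v ∈ L ⊔ L' := hsupL' ▸ Submodule.mem_top
    obtain ⟨a, ha, b, hb, h⟩ := Submodule.mem_sup.1 hv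
    exact ⟨⟨a, ha⟩, ⟨b, hb⟩, h.symm⟩
  have hwL : ∀ a : L, w (a : V) = (a : V) := by
    intro a
    have := hw a 0
    simpa using this
  have hwL' : ∀ b : L', w (b : V) = ((g b : M) : V) := by
    intro b
    have := hw 0 b
    simpa using this
  -- w is symplectic
  have hsymp : ∀ x y : V, s (w x) (w y) = s x y := by
    intro x y
    obtain ⟨a, b, rfl⟩ := hdecomp x
    obtain ⟨c, d, rfl⟩ := hdecomp y
    rw [hw, hw]
    simp only [map_add, LinearMap.add_apply]
    have h1 : s (a : V) (c : V) = 0 := hLsing _ a.2 _ c.2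
    have h2 : s (a : V) ((g d : M) : V) = s (a : V) (d : V) := hg d a
    have h3 : s ((g b : M) : V) (c : V) = s (b : V) (c : V) := by
      linear_combination hskew ((g b : M) : V) (c : V) - hskew (b : V) (c : V) - hg b c
    have h4 : s ((g b : M) : V) ((g d : M) : V) = 0 := hMsing _ (g b).2 _ (g d).2
    have h5 : s (b : V) (d : V) = 0 := hL'sing _ b.2 _ d.2
    rw [h1, h2, h3, h4, h5]
  refine ⟨w, hsymp, ?_, ?_⟩
  · intro x hx y hy
    have h1 : s x (w.symm (u (w y))) = s (w x) (u (w y)) := by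
      have := hsymp x (w.symm (u (w y)))
      rw [LinearEquiv.apply_symm_apply] at this
      exact this.symm
    rw [h1, hwL ⟨x, hx⟩, hwL ⟨y, hy⟩]
  · ext z
    simp only [Submodule.mem_map, LinearMap.coe_comp, Function.comp_apply,
      LinearEquiv.coe_coe]
    constructor
    · rintro ⟨a, ha, rfl⟩
      rw [hwL ⟨a, ha⟩]
      have huaM : u a ∈ M := Submodule.mem_map_of_mem ha
      obtain ⟨b, hb⟩ : ∃ b : L', g b = ⟨u a, huaM⟩ := ⟨g.symm ⟨u a, huaM⟩, by simp⟩
      have : w (b : V) = u a := by rw [hwL' b, hb]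
      rw [← this, LinearEquiv.symm_apply_apply]
      exact b.2
    · intro hz
      set b : L' := ⟨z, hz⟩
      have hM' : ((g b : M) : V) ∈ M := (g b).2
      obtain ⟨a, ha, hab⟩ := (hmemM _).1 hM'
      refine ⟨a, ha, ?_⟩
      rw [hwL ⟨a, ha⟩]
      show w.symm (u a) = z
      rw [hab, ← hwL' b, LinearEquiv.symm_apply_apply]
end

section
/- Let F be a field of characteristic not 2, V a 6-dimensional F-vector space with a symplectic form s, L a Lagrangian of (V, s), and b a nondegenerate symmetric bilinear form on L. Then there exist a linear automorphism v of L and u ∈ Sp(s) such that: (i) v is cyclic (some vector of L has iterates under v spanning L), det v = 1, and the minimal polynomial of v is coprime with its reciprocal polynomial; (ii) u is a product of two involutions of Sp(s); (iii) s(x, u y) = b(x, v y) for all x, y ∈ L. -/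
set_option maxRecDepth 8000
set_option maxHeartbeats 1000000

open Polynomial

section SRef

variable {F : Type*} [Field F] {V : Type*} [AddCommGroup V] [Module F V]
variable (s : V →ₗ[F] V →ₗ[F] F)

/-- symplectic "reflection in a hyperbolic plane" building block -/
def sref (x y : V) : V →ₗ[F] V :=
  LinearMap.id - (2 : F) • (s.flip y).smulRight x + (2 : F) • (s.flip x).smulRight y

theorem sref_apply (x y t : V) :
    sref s x y t = t - ((2:F) * s t y) • x + ((2:F) * s t x) • y := by
  simp only [sref, LinearMap.add_apply, LinearMap.sub_apply, LinearMap.smul_apply,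
    LinearMap.id_apply, LinearMap.smulRight_apply, LinearMap.flip_apply, smul_smul]

variable {s}
variable (halt : ∀ x, s x x = 0)

include halt in
theorem s_skew (a c : V) : s a c = - s c a := by
  have h := halt (a + c)
  simp only [map_add, LinearMap.add_apply, halt a, halt c] at h
  linear_combination h

section
variable {x y : V} (hxy : s x y = 1)

include halt hxy in
theorem sref_pair_x (t : V) : s (sref s x y t) x = - s t x := by
  have hyx : s y x = -1 := by rw [s_skew halt, hxy]
  simp [sref_apply, map_sub, map_add, LinearMap.sub_apply, LinearMap.add_apply,
    map_smul, smul_eq_mul, halt x, hyx]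
  ring

include halt hxy in
theorem sref_pair_y (t : V) : s (sref s x y t) y = - s t y := by
  simp [sref_apply, map_sub, map_add, LinearMap.sub_apply, LinearMap.add_apply,
    map_smul, smul_eq_mul, halt y, hxy]
  ring

include halt hxy in
theorem sref_invol (t : V) : sref s x y (sref s x y t) = t := by
  conv_lhs => rw [sref_apply s x y (sref s x y t)]
  rw [sref_pair_x halt hxy, sref_pair_y halt hxy, sref_apply]
  module

include halt hxy in
theorem sref_isom (a c : V) : s (sref s x y a) (sref s x y c) = s a c := by
  have hyx : s y x = -1 := by rw [s_skew halt, hxy]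
  have hxc : s x c = - s c x := s_skew halt x c
  have hyc : s y c = - s c y := s_skew halt y c
  rw [sref_apply s x y c, sref_apply s x y a]
  simp only [map_sub, map_add, map_smul, LinearMap.sub_apply, LinearMap.add_apply,
    LinearMap.smul_apply, smul_eq_mul]
  rw [halt x, halt y, hxy, hyx, hxc, hyc]
  ring

include halt hxy in
theorem sref_swap (a c : V) : s a (sref s x y c) = s (sref s x y a) c := by
  conv_lhs => rw [← sref_invol halt hxy a]
  rw [sref_isom halt hxy]

end
end SRef

section Aux
variable {F : Type*} [Field F]

theorem pbezout (h4 : (4:F) ≠ 0) :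
    IsCoprime (X^3 + X^2 + X - 1 : F[X]) (X^3 - X^2 - X - 1 : F[X]) := by
  refine ⟨C (4:F)⁻¹ * (X^2 - 3), C (4:F)⁻¹ * (-(X+1)^2), ?_⟩
  have h : ((X^2 - 3) * (X^3 + X^2 + X - 1) + (-(X+1)^2) * (X^3 - X^2 - X - 1) : F[X])
      = C 4 := by
    rw [map_ofNat]
    ring
  calc C (4:F)⁻¹ * (X^2 - 3) * (X^3 + X^2 + X - 1)
        + C (4:F)⁻¹ * (-(X+1)^2) * (X^3 - X^2 - X - 1)
      = C (4:F)⁻¹ * ((X^2 - 3) * (X^3 + X^2 + X - 1)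
        + (-(X+1)^2) * (X^3 - X^2 - X - 1)) := by ring
    _ = C (4:F)⁻¹ * C 4 := by rw [h]
    _ = 1 := by rw [← map_mul, inv_mul_cancel₀ h4, map_one]

theorem pmonic : (X^3 + X^2 + X - 1 : F[X]).Monic := by
  have h2 : ((X:F[X])^2 + X - 1).degree ≤ 2 := by compute_degree
  have h3 : ((X:F[X])^2 + X - 1).degree < 3 := lt_of_le_of_lt h2 (by decide)
  have h := Polynomial.monic_X_pow_add (p := (X^2 + X - 1 : F[X])) (n := 3) h3
  convert h using 1
  ring

theorem pnatdeg : (X^3 + X^2 + X - 1 : F[X]).natDegree = 3 := by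
  compute_degree!

theorem preverse :
    (X^3 + X^2 + X - 1 : F[X]).reverse = 1 + X + X^2 - X^3 := by
  have e0 : reflect 3 (X ^ 3 + X ^ 2 + X - 1 : F[X])
      = reflect 3 (X^3) + reflect 3 (X^2) + reflect 3 (X^1) - reflect 3 (X^0) := by
    rw [reflect_sub, reflect_add, reflect_add, pow_one, pow_zero]
  rw [Polynomial.reverse, pnatdeg, e0, reflect_monomial, reflect_monomial,
    reflect_monomial, reflect_monomial]
  norm_num [Polynomial.revAt_le]

theorem pcoeff0 : (X^3 + X^2 + X - 1 : F[X]).coeff 0 = -1 := by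
  simp [coeff_one]

end Aux

section VPart
variable {F : Type*} [Field F] {L : Type*} [AddCommGroup L] [Module F L]
  [Module.Finite F L]

theorem exists_v (ε : Module.Basis (Fin 3) F L) : ∃ v : L ≃ₗ[F] L,
    (v : L →ₗ[F] L) (ε 0) = ε 1 ∧ (v : L →ₗ[F] L) (ε 1) = ε 2 ∧
    (v : L →ₗ[F] L) (ε 2) = ε 0 - ε 1 - ε 2 ∧
    (∃ x : L, Submodule.span F (Set.range fun k : ℕ => ((v : L →ₗ[F] L) ^ k) x) = ⊤) ∧
    LinearMap.det (v : L →ₗ[F] L) = 1 ∧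
    minpoly F (v : L →ₗ[F] L) = X^3 + X^2 + X - 1 := by
  obtain ⟨vm, hv0, hv1, hv2⟩ : ∃ vm : L →ₗ[F] L,
      vm (ε 0) = ε 1 ∧ vm (ε 1) = ε 2 ∧ vm (ε 2) = ε 0 - ε 1 - ε 2 :=
    ⟨ε.constr F ![ε 1, ε 2, ε 0 - ε 1 - ε 2],
      by rw [ε.constr_basis]; rfl, by rw [ε.constr_basis]; rfl,
      by rw [ε.constr_basis]; rfl⟩
  obtain ⟨wm, hw0, hw1, hw2⟩ : ∃ wm : L →ₗ[F] L,
      wm (ε 0) = ε 0 + ε 1 + ε 2 ∧ wm (ε 1) = ε 0 ∧ wm (ε 2) = ε 1 :=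
    ⟨ε.constr F ![ε 0 + ε 1 + ε 2, ε 0, ε 1],
      by rw [ε.constr_basis]; rfl, by rw [ε.constr_basis]; rfl,
      by rw [ε.constr_basis]; rfl⟩
  have hco1 : vm ∘ₗ wm = LinearMap.id := by
    apply ε.ext; intro i
    fin_cases i <;>
      simp [hw0, hw1, hw2, hv0, hv1, hv2, map_add, map_sub] <;> abel
  have hco2 : wm ∘ₗ vm = LinearMap.id := by
    apply ε.ext; intro i
    fin_cases i <;>
      simp [hw0, hw1, hw2, hv0, hv1, hv2, map_add, map_sub] <;> abel
  refine ⟨LinearEquiv.ofLinear vm wm hco1 hco2, ?_, ?_, ?_, ?_, ?_, ?_⟩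
  · exact hv0
  · exact hv1
  · exact hv2
  · -- cyclic
    refine ⟨ε 0, ?_⟩
    rw [eq_top_iff, ← ε.span_eq]
    rw [Submodule.span_le]
    rintro _ ⟨i, rfl⟩
    fin_cases i
    · exact Submodule.subset_span ⟨0, by simp⟩
    · exact Submodule.subset_span ⟨1, by simpa using hv0⟩
    · refine Submodule.subset_span ⟨2, ?_⟩
      show (vm ^ 2) (ε 0) = ε 2
      rw [pow_two, Module.End.mul_apply, hv0, hv1]
  · -- det
    show LinearMap.det vm = 1
    rw [← LinearMap.det_toMatrix ε, Matrix.det_fin_three]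
    simp [LinearMap.toMatrix_apply, hv0, hv1, hv2, map_sub, Module.Basis.repr_self,
      Finsupp.sub_apply, Finsupp.single_apply]
  · -- minpoly
    show minpoly F vm = X^3 + X^2 + X - 1
    have hmono : (X^3 + X^2 + X - 1 : F[X]).Monic := pmonic
    have haev : (Polynomial.aeval vm) (X^3 + X^2 + X - 1 : F[X]) = 0 := by
      apply ε.ext; intro i
      have h3 : ∀ t : L, (vm ^ 3) t = vm (vm (vm t)) := by
        intro t; rw [pow_succ, pow_succ, pow_one]; rfl
      have h2 : ∀ t : L, (vm ^ 2) t = vm (vm t) := by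
        intro t; rw [pow_two]; rfl
      simp only [map_add, map_sub, map_one, map_pow, aeval_X, LinearMap.add_apply,
        LinearMap.sub_apply, Module.End.one_apply, LinearMap.zero_apply, h3, h2]
      fin_cases i <;>
        · simp [hv0, hv1, hv2, map_sub, map_add]
          try abel
    have hint : IsIntegral F vm := LinearMap.isIntegral vm
    have hdvd : minpoly F vm ∣ (X^3 + X^2 + X - 1 : F[X]) := minpoly.dvd F vm haev
    have hdeg3 : 3 ≤ (minpoly F vm).natDegree := by
      by_contra hlt
      push_neg at hlt
      have hlt' : (minpoly F vm).natDegree < 3 := hlt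
      have hzero := minpoly.aeval F vm
      have happ : (Polynomial.aeval vm (minpoly F vm)) (ε 0) = 0 := by
        rw [hzero]; rfl
      rw [Polynomial.aeval_eq_sum_range' hlt'] at happ
      have hexp : (∑ k ∈ Finset.range 3, (minpoly F vm).coeff k • vm ^ k) (ε 0)
          = (minpoly F vm).coeff 0 • ε 0 + (minpoly F vm).coeff 1 • ε 1
            + (minpoly F vm).coeff 2 • ε 2 := by
        rw [Finset.sum_range_succ, Finset.sum_range_succ, Finset.sum_range_one]
        simp only [LinearMap.add_apply, LinearMap.smul_apply, pow_zero, pow_one,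
          Module.End.one_apply]
        have : (vm ^ 2) (ε 0) = ε 2 := by rw [pow_two, Module.End.mul_apply, hv0, hv1]
        rw [this, hv0]
      rw [hexp] at happ
      have hcoef : ∀ k : Fin 3, (minpoly F vm).coeff k = 0 := by
        have hli := ε.linearIndependent
        rw [Fintype.linearIndependent_iff] at hli
        have := hli (fun k : Fin 3 => (minpoly F vm).coeff k) ?_
        · exact this
        · rw [Fin.sum_univ_three]
          convert happ using 2 <;> norm_num
      have : minpoly F vm = 0 := by
        ext n
        rcases n with _ | _ | _ | n
        · simpa using hcoef 0
        · simpa using hcoef 1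
        · simpa using hcoef 2
        · have : (minpoly F vm).natDegree < n + 3 := by omega
          simp [Polynomial.coeff_eq_zero_of_natDegree_lt this]
      exact minpoly.ne_zero hint this
    exact (Polynomial.eq_of_monic_of_dvd_of_natDegree_le (minpoly.monic hint) hmono
      hdvd (by rw [pnatdeg]; exact hdeg3)).symm
end VPart


/-- Let `(V, s)` be a 6-dimensional symplectic space over a field `F` of characteristic
not 2, `L` a Lagrangian of `(V, s)` and `b` a nondegenerate symmetric bilinear form on
`L`. Then there exist a cyclic automorphism `v` of `L` with `det v = 1` whose minimal
polynomial is coprime with its reciprocal polynomial, and a product of two involutions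
`u ∈ Sp(s)`, such that `s(x, u y) = b(x, v y)` for all `x, y ∈ L`. -/
theorem dim_six_key_lemma
    (F : Type*) [Field F] (hF : ringChar F ≠ 2)
    (V : Type*) [AddCommGroup V] [Module F V] [FiniteDimensional F V]
    (hdim : Module.finrank F V = 6)
    (s : V →ₗ[F] V →ₗ[F] F)
    (halt : ∀ x, s x x = 0)
    (hnd : ∀ x, (∀ y, s x y = 0) → x = 0)
    (L : Submodule F V)
    (hLsing : ∀ x ∈ L, ∀ y ∈ L, s x y = 0)
    (hLdim : Module.finrank F L = 3)
    (b : L →ₗ[F] L →ₗ[F] F)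
    (hbsymm : ∀ x y, b x y = b y x)
    (hbnd : ∀ x, (∀ y, b x y = 0) → x = 0) :
    ∃ (v : L ≃ₗ[F] L) (u : V ≃ₗ[F] V),
      (∃ x : L, Submodule.span F
        (Set.range fun k : ℕ => ((v : L →ₗ[F] L) ^ k) x) = ⊤) ∧
      LinearMap.det (v : L →ₗ[F] L) = 1 ∧
      IsCoprime (minpoly F (v : L →ₗ[F] L))
        (C ((minpoly F (v : L →ₗ[F] L)).coeff 0)⁻¹ *
          (minpoly F (v : L →ₗ[F] L)).reverse) ∧
      (∀ x y, s (u x) (u y) = s x y) ∧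
      (∃ i j : V ≃ₗ[F] V,
        (∀ x y, s (i x) (i y) = s x y) ∧
        (∀ x y, s (j x) (j y) = s x y) ∧
        (∀ x, i (i x) = x) ∧ (∀ x, j (j x) = x) ∧
        (∀ x, u x = i (j x))) ∧
      (∀ x y : L, s (x : V) (u (y : V)) = b x (v y)) := by
  -- characteristic facts
  have two_ne : (2:F) ≠ 0 := by
    intro h
    exact hF (((Nat.dvd_prime Nat.prime_two).mp
      (ringChar.dvd h)).resolve_left CharP.ringChar_ne_one)
  have four_ne : (4:F) ≠ 0 := by
    have : (4:F) = 2 * 2 := by norm_num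
    rw [this]; exact mul_ne_zero two_ne two_ne
  haveI : Invertible (2:F) := invertibleOfNonzero two_ne
  -- orthogonal basis of (L, b)
  have bsymm : LinearMap.IsSymm b := LinearMap.isSymm_def.mpr fun x y => hbsymm x y
  obtain ⟨ε₀, hε₀⟩ := LinearMap.BilinForm.exists_orthogonal_basis bsymm
  set ε : Module.Basis (Fin 3) F L := ε₀.reindex (finCongr hLdim) with hεdef
  have hortho : ∀ i j : Fin 3, i ≠ j → b (ε i) (ε j) = 0 := by
    intro i j hij
    rw [hεdef]
    simp only [Module.Basis.reindex_apply]
    exact hε₀ (fun h => hij ((finCongr hLdim).symm.injective h))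
  set d : Fin 3 → F := fun i => b (ε i) (ε i) with hd
  have hdne : ∀ i, d i ≠ 0 := by
    intro i h0
    have hzall : ∀ yl : L, b (ε i) yl = 0 := by
      have : b (ε i) = 0 := by
        apply ε.ext
        intro j
        by_cases hij : i = j
        · subst hij; simpa using h0
        · simpa using hortho i j hij
      intro yl; rw [this]; rfl
    exact ε.ne_zero i (hbnd (ε i) hzall)
  -- the cyclic automorphism v of L
  obtain ⟨v, hv0, hv1, hv2, hcyc, hdet, hmin⟩ := exists_v ε
  -- skew-symmetry of s
  have hskew : ∀ a c : V, s a c = - s c a := s_skew halt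
  -- dual family
  obtain ⟨L', hLc⟩ := Submodule.exists_isCompl L
  set pr : V →ₗ[F] L := L.linearProjOfIsCompl L' hLc with hpr
  have hsurj : Function.Surjective (LinearMap.flip s : V →ₗ[F] Module.Dual F V) := by
    have hinj : Function.Injective (LinearMap.flip s : V →ₗ[F] Module.Dual F V) := by
      rw [← LinearMap.ker_eq_bot, Submodule.eq_bot_iff]
      intro t ht
      apply hnd t
      intro yv
      have h1 : s yv t = 0 := by
        have : (LinearMap.flip s) t = 0 := ht
        calc s yv t = (LinearMap.flip s) t yv := rfl
          _ = 0 := by rw [this]; rfl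
      rw [hskew t yv, h1, neg_zero]
    apply LinearMap.range_eq_top.mp
    apply Submodule.eq_top_of_finrank_eq
    rw [LinearMap.finrank_range_of_inj hinj, Subspace.dual_finrank_eq]
  have hφex : ∀ i : Fin 3, ∃ t : V, ∀ j : Fin 3,
      s ((ε j : L) : V) t = if i = j then 1 else 0 := by
    intro i
    obtain ⟨t, ht⟩ := hsurj ((ε.coord i) ∘ₗ pr)
    refine ⟨t, fun j => ?_⟩
    have h1 : s ((ε j : L) : V) t = ((ε.coord i) ∘ₗ pr) ((ε j : L) : V) := by
      rw [← ht]; rfl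
    rw [h1]
    simp only [LinearMap.comp_apply, hpr, Submodule.linearProjOfIsCompl, Submodule.projectionOnto_apply_left]
    rw [Module.Basis.coord_apply, Module.Basis.repr_self]
    simp [Finsupp.single_apply, eq_comm]
  obtain ⟨φ1, hφ1⟩ := hφex 0
  obtain ⟨φ2, hφ2⟩ := hφex 1
  obtain ⟨φ3, hφ3⟩ := hφex 2
  -- abbreviations
  set e0 : V := ((ε 0 : L) : V) with he0
  set e1 : V := ((ε 1 : L) : V) with he1
  set e2 : V := ((ε 2 : L) : V) with he2
  have hee : ∀ i j : Fin 3, s ((ε i : L) : V) ((ε j : L) : V) = 0 :=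
    fun i j => hLsing _ (ε i).2 _ (ε j).2
  have hee00 : s e0 e0 = 0 := hee 0 0
  have hee01 : s e0 e1 = 0 := hee 0 1
  have hee02 : s e0 e2 = 0 := hee 0 2
  have hee10 : s e1 e0 = 0 := hee 1 0
  have hee11 : s e1 e1 = 0 := hee 1 1
  have hee12 : s e1 e2 = 0 := hee 1 2
  have hee20 : s e2 e0 = 0 := hee 2 0
  have hee21 : s e2 e1 = 0 := hee 2 1
  have hee22 : s e2 e2 = 0 := hee 2 2
  -- Lagrangian-complement vectors
  set f1 : V := φ1 with hf1
  set f2 : V := φ2 + (s φ1 φ2) • e0 with hf2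
  set f3 : V := φ3 + (s φ1 φ3) • e0 + (s f2 φ3) • e1 with hf3
  have hef : (s e0 f1 = 1 ∧ s e1 f1 = 0 ∧ s e2 f1 = 0)
      ∧ (s e0 f2 = 0 ∧ s e1 f2 = 1 ∧ s e2 f2 = 0)
      ∧ (s e0 f3 = 0 ∧ s e1 f3 = 0 ∧ s e2 f3 = 1) := by
    refine ⟨⟨?_, ?_, ?_⟩, ⟨?_, ?_, ?_⟩, ⟨?_, ?_, ?_⟩⟩ <;>
      simp only [hf1, hf2, hf3, map_add, map_smul, LinearMap.add_apply,
        LinearMap.smul_apply, smul_eq_mul, hee00, hee01, hee10, hee11, hee20, hee21] <;>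
      simp [← hf1, hφ1 0, hφ1 1, hφ1 2, hφ2 0, hφ2 1, hφ2 2, hφ3 0, hφ3 1, hφ3 2,
        he0, he1, he2]
  obtain ⟨⟨h01, h11, h21⟩, ⟨h02, h12, h22⟩, ⟨h03, h13, h23⟩⟩ := hef
  have hfe : ∀ (a c : V), s a c = 0 → s c a = 0 := by
    intro a c h; rw [hskew]; rw [h, neg_zero]
  have hf10 : s f1 e0 = -1 := by rw [hskew, h01]
  have hf11 : s f1 e1 = 0 := hfe _ _ h11
  have hf12 : s f1 e2 = 0 := hfe _ _ h21
  have hf20 : s f2 e0 = 0 := hfe _ _ h02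
  have hf21 : s f2 e1 = -1 := by rw [hskew, h12]
  have hf22 : s f2 e2 = 0 := hfe _ _ h22
  have hf30 : s f3 e0 = 0 := hfe _ _ h03
  have hf31 : s f3 e1 = 0 := hfe _ _ h13
  have hf32 : s f3 e2 = -1 := by rw [hskew, h23]
  have hff11 : s f1 f1 = 0 := halt f1
  have hff22 : s f2 f2 = 0 := halt f2
  have hff33 : s f3 f3 = 0 := halt f3
  have hff12 : s f1 f2 = 0 := by
    rw [hf2]
    simp only [map_add, map_smul, smul_eq_mul]
    rw [hf10]; ring
  have hff13 : s f1 f3 = 0 := by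
    rw [hf3]
    simp only [map_add, map_smul, smul_eq_mul]
    rw [hf10, hf11]; ring
  have hff23 : s f2 f3 = 0 := by
    rw [hf3]
    simp only [map_add, map_smul, smul_eq_mul]
    rw [hf20, hf21]; ring
  have hff21 : s f2 f1 = 0 := hfe _ _ hff12
  have hff31 : s f3 f1 = 0 := hfe _ _ hff13
  have hff32 : s f3 f2 = 0 := hfe _ _ hff23
  -- diagonal entries of b
  set da : F := d 0 with hda
  set db : F := d 1 with hdb
  set dc : F := d 2 with hdc
  have hdan : da ≠ 0 := hdne 0
  have hdbn : db ≠ 0 := hdne 1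
  have hdcn : dc ≠ 0 := hdne 2
  -- the four vectors defining the two symplectic reflections
  set xx : V := ((dc - db)/(da*dc)) • e0 + f3 with hxx
  set yy : V := (-dc/(2*da)) • e0 - e2 - (dc/2) • f2 with hyy
  set zz : V := f1 with hzz
  set ww : V := -e0 - (da/(2*dc)) • e1 - (db/(2*dc)) • e2 - (da/2) • f3 with hww
  -- pairing table for the new vectors
  have he0x : s e0 xx = 0 := by
    rw [hxx]; simp only [map_add, map_smul, smul_eq_mul, hee00, h03]; ring
  have he1x : s e1 xx = 0 := by
    rw [hxx]; simp only [map_add, map_smul, smul_eq_mul, hee10, h13]; ring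
  have he2x : s e2 xx = 1 := by
    rw [hxx]; simp only [map_add, map_smul, smul_eq_mul, hee20, h23]; ring
  have he0y : s e0 yy = 0 := by
    rw [hyy]
    simp only [map_add, map_sub, map_smul, smul_eq_mul, hee00, hee02, h02]; ring
  have he1y : s e1 yy = -(dc/2) := by
    rw [hyy]
    simp only [map_add, map_sub, map_smul, smul_eq_mul, hee10, hee12, h12]; ring
  have he2y : s e2 yy = 0 := by
    rw [hyy]
    simp only [map_add, map_sub, map_smul, smul_eq_mul, hee20, hee22, h22]; ring
  have he0z : s e0 zz = 1 := h01
  have he1z : s e1 zz = 0 := h11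
  have he2z : s e2 zz = 0 := h21
  have he0w : s e0 ww = 0 := by
    rw [hww]
    simp only [map_add, map_sub, map_neg, map_smul, smul_eq_mul,
      hee00, hee01, hee02, h03]
    ring
  have he1w : s e1 ww = 0 := by
    rw [hww]
    simp only [map_add, map_sub, map_neg, map_smul, smul_eq_mul,
      hee10, hee11, hee12, h13]
    ring
  have he2w : s e2 ww = -(da/2) := by
    rw [hww]
    simp only [map_add, map_sub, map_neg, map_smul, smul_eq_mul,
      hee20, hee21, hee22, h23]
    ring
  have hxe0 : s xx e0 = 0 := hfe _ _ he0x
  have hxe1 : s xx e1 = 0 := hfe _ _ he1x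
  have hxe2 : s xx e2 = -1 := by rw [hskew, he2x]
  have hye0 : s yy e0 = 0 := hfe _ _ he0y
  have hye1 : s yy e1 = dc/2 := by rw [hskew, he1y]; ring
  have hye2 : s yy e2 = 0 := hfe _ _ he2y
  -- cross pairings
  have hxz : s xx zz = (dc - db)/(da*dc) := by
    rw [hxx, hzz]
    simp only [map_add, LinearMap.add_apply, map_smul, LinearMap.smul_apply,
      smul_eq_mul]
    rw [← hzz]
    rw [show s e0 zz = 1 from he0z, show s f3 zz = 0 from hzz ▸ hff31]
    ring
  have hxw : s xx ww = db/(2*dc) := by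
    have hf3w : s f3 ww = db/(2*dc) := by
      rw [hww]
      simp only [map_add, map_sub, map_neg, map_smul, smul_eq_mul,
        hf30, hf31, hf32, hff33]
      field_simp [two_ne, four_ne, hdan, hdbn, hdcn]
      ring
    have he0w' := he0w
    rw [hxx]
    simp only [map_add, LinearMap.add_apply, map_smul, LinearMap.smul_apply,
      smul_eq_mul]
    rw [he0w', hf3w]
    ring
  have hyz : s yy zz = -dc/(2*da) := by
    rw [hyy]
    simp only [map_add, map_sub, LinearMap.sub_apply, LinearMap.add_apply,
      map_smul, LinearMap.smul_apply, smul_eq_mul]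
    rw [show s e0 zz = 1 from he0z, show s e2 zz = 0 from he2z,
      show s f2 zz = 0 from hzz ▸ hff21]
    ring
  have hyw : s yy ww = da/4 := by
    have hf2w : s f2 ww = da/(2*dc) := by
      rw [hww]
      simp only [map_add, map_sub, map_neg, map_smul, smul_eq_mul,
        hf20, hf21, hf22, hff23]
      field_simp [two_ne, four_ne, hdan, hdbn, hdcn]
      ring
    have he2w' : s e2 ww = -(da/2) := he2w
    have he0w' : s e0 ww = 0 := he0w
    rw [hyy]
    simp only [map_sub, map_smul, LinearMap.sub_apply, LinearMap.smul_apply,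
      smul_eq_mul]
    rw [he0w', he2w', hf2w]
    field_simp [two_ne, four_ne, hdan, hdbn, hdcn]
    ring
  have hsxy : s xx yy = 1 := by
    have hf3y : s f3 yy = 1 := by
      rw [hyy]
      simp only [map_add, map_sub, map_smul, smul_eq_mul, hf30, hf32, hff32]
      ring
    rw [hxx]
    simp only [map_add, LinearMap.add_apply, map_smul, LinearMap.smul_apply,
      smul_eq_mul]
    rw [show s e0 yy = 0 from he0y, hf3y]
    ring
  have hszw : s zz ww = 1 := by
    rw [hzz, hww]
    simp only [map_add, map_sub, map_neg, map_smul, smul_eq_mul,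
      hf10, hf11, hf12]
    rw [← hzz, show s zz f3 = 0 from hzz ▸ hff13]
    rw [show s zz e0 = -1 from hf10, show s zz e1 = 0 from hf11, show s zz e2 = 0 from hf12]
    ring
  -- the two reflections
  set σm : V →ₗ[F] V := sref s xx yy with hσm
  set τm : V →ₗ[F] V := sref s zz ww with hτm
  have hσinv : ∀ t, σm (σm t) = t := fun t => sref_invol halt hsxy t
  have hτinv : ∀ t, τm (τm t) = t := fun t => sref_invol halt hszw t
  have hσisom : ∀ a c, s (σm a) (σm c) = s a c := fun a c => sref_isom halt hsxy a c
  have hτisom : ∀ a c, s (τm a) (τm c) = s a c := fun a c => sref_isom halt hszw a c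
  set σe : V ≃ₗ[F] V := LinearEquiv.ofLinear σm σm
    (LinearMap.ext hσinv) (LinearMap.ext hσinv) with hσe
  set τe : V ≃ₗ[F] V := LinearEquiv.ofLinear τm τm
    (LinearMap.ext hτinv) (LinearMap.ext hτinv) with hτe
  set u : V ≃ₗ[F] V := τe.trans σe with hu
  have hu_apply : ∀ t : V, u t = σm (τm t) := by
    intro t
    rw [hu, LinearEquiv.trans_apply, hσe, hτe, LinearEquiv.ofLinear_apply,
      LinearEquiv.ofLinear_apply]
  -- images of the basis vectors of L
  have hσ0 : σm e0 = e0 := by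
    rw [hσm, sref_apply, he0y, he0x]; simp
  have hσ1 : σm e1 = e1 + dc • xx := by
    rw [hσm, sref_apply, he1y, he1x]
    match_scalars <;> (first
      | (field_simp [two_ne, hdan, hdbn, hdcn]; ring)
      | field_simp [two_ne, hdan, hdbn, hdcn])
  have hσ2 : σm e2 = e2 + (2:F) • yy := by
    rw [hσm, sref_apply, he2y, he2x]
    match_scalars <;> ring
  have hτ0 : τm e0 = e0 + (2:F) • ww := by
    rw [hτm, sref_apply, he0w, he0z]
    match_scalars <;> ring
  have hτ1 : τm e1 = e1 := by
    rw [hτm, sref_apply, he1w, he1z]; simp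
  have hτ2 : τm e2 = e2 + da • zz := by
    rw [hτm, sref_apply, he2w, he2z]
    match_scalars <;> field_simp [two_ne, hdan, hdbn, hdcn] <;> ring
  -- the nine key identities
  have swapσ : ∀ a c : V, s a (σm c) = s (σm a) c := by
    intro a c
    rw [hσm]; exact sref_swap halt hsxy a c
  have hb00 : b (ε 0) ((v : L →ₗ[F] L) (ε 0)) = 0 := by
    rw [hv0]; exact hortho 0 1 (by decide)
  have hb10 : b (ε 1) ((v : L →ₗ[F] L) (ε 0)) = db := by rw [hv0, hdb, hd]
  have hb20 : b (ε 2) ((v : L →ₗ[F] L) (ε 0)) = 0 := by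
    rw [hv0]; exact hortho 2 1 (by decide)
  have hb01 : b (ε 0) ((v : L →ₗ[F] L) (ε 1)) = 0 := by
    rw [hv1]; exact hortho 0 2 (by decide)
  have hb11 : b (ε 1) ((v : L →ₗ[F] L) (ε 1)) = 0 := by
    rw [hv1]; exact hortho 1 2 (by decide)
  have hb21 : b (ε 2) ((v : L →ₗ[F] L) (ε 1)) = dc := by rw [hv1, hdc, hd]
  have hb02 : b (ε 0) ((v : L →ₗ[F] L) (ε 2)) = da := by
    rw [hv2]
    simp only [map_sub]
    rw [hortho 0 1 (by decide), hortho 0 2 (by decide), hda, hd]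
    ring
  have hb12 : b (ε 1) ((v : L →ₗ[F] L) (ε 2)) = -db := by
    rw [hv2]
    simp only [map_sub]
    rw [hortho 1 0 (by decide), hortho 1 2 (by decide), hdb, hd]
    ring
  have hb22 : b (ε 2) ((v : L →ₗ[F] L) (ε 2)) = -dc := by
    rw [hv2]
    simp only [map_sub]
    rw [hortho 2 0 (by decide), hortho 2 1 (by decide), hdc, hd]
    ring
  have k00 : s (σm e0) (τm e0) = b (ε 0) ((v : L →ₗ[F] L) (ε 0)) := by
    rw [hσ0, hτ0, hb00]
    simp only [map_add, map_smul, smul_eq_mul, hee00, he0w]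
    ring
  have k01 : s (σm e0) (τm e1) = b (ε 0) ((v : L →ₗ[F] L) (ε 1)) := by
    rw [hσ0, hτ1, hb01, hee01]
  have k02 : s (σm e0) (τm e2) = b (ε 0) ((v : L →ₗ[F] L) (ε 2)) := by
    rw [hσ0, hτ2, hb02]
    simp only [map_add, map_smul, smul_eq_mul, hee02, he0z]
    rw [hxz] at *
    ring
  have k10 : s (σm e1) (τm e0) = b (ε 1) ((v : L →ₗ[F] L) (ε 0)) := by
    rw [hσ1, hτ0, hb10]
    simp only [map_add, LinearMap.add_apply, map_smul, LinearMap.smul_apply,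
      smul_eq_mul, hee10, he1w, hxe0, hxw]
    field_simp [two_ne, four_ne, hdan, hdbn, hdcn]
    ring
  have k11 : s (σm e1) (τm e1) = b (ε 1) ((v : L →ₗ[F] L) (ε 1)) := by
    rw [hσ1, hτ1, hb11]
    simp only [map_add, LinearMap.add_apply, map_smul, LinearMap.smul_apply,
      smul_eq_mul, hee11, hxe1]
    ring
  have k12 : s (σm e1) (τm e2) = b (ε 1) ((v : L →ₗ[F] L) (ε 2)) := by
    rw [hσ1, hτ2, hb12]
    simp only [map_add, LinearMap.add_apply, map_smul, LinearMap.smul_apply,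
      smul_eq_mul, hee12, he1z, hxe2, hxz]
    field_simp [two_ne, four_ne, hdan, hdbn, hdcn]
    ring
  have k20 : s (σm e2) (τm e0) = b (ε 2) ((v : L →ₗ[F] L) (ε 0)) := by
    rw [hσ2, hτ0, hb20]
    simp only [map_add, LinearMap.add_apply, map_smul, LinearMap.smul_apply,
      smul_eq_mul, hee20, he2w, hye0, hyw]
    field_simp [two_ne, four_ne, hdan, hdbn, hdcn]
    ring
  have k21 : s (σm e2) (τm e1) = b (ε 2) ((v : L →ₗ[F] L) (ε 1)) := by
    rw [hσ2, hτ1, hb21]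
    simp only [map_add, LinearMap.add_apply, map_smul, LinearMap.smul_apply,
      smul_eq_mul, hee21, hye1]
    field_simp [two_ne, four_ne, hdan, hdbn, hdcn]
    ring
  have k22 : s (σm e2) (τm e2) = b (ε 2) ((v : L →ₗ[F] L) (ε 2)) := by
    rw [hσ2, hτ2, hb22]
    simp only [map_add, LinearMap.add_apply, map_smul, LinearMap.smul_apply,
      smul_eq_mul, hee22, he2z, hye2, hyz]
    field_simp [two_ne, four_ne, hdan, hdbn, hdcn]
    ring
  have key : ∀ i j : Fin 3, s (σm ((ε i : L) : V)) (τm ((ε j : L) : V))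
      = b (ε i) ((v : L →ₗ[F] L) (ε j)) := by
    intro i j
    fin_cases i <;> fin_cases j
    · exact k00
    · exact k01
    · exact k02
    · exact k10
    · exact k11
    · exact k12
    · exact k20
    · exact k21
    · exact k22
  -- assemble everything
  refine ⟨v, u, hcyc, hdet, ?_, ?_, ⟨σe, τe, ?_, ?_, ?_, ?_, ?_⟩, ?_⟩
  · -- coprimality
    rw [hmin, pcoeff0, preverse]
    have h1 : ((-1 : F))⁻¹ = -1 := by norm_num
    rw [h1]
    have h2 : (C (-1 : F)) * (1 + X + X^2 - X^3) = X^3 - X^2 - X - 1 := by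
      rw [map_neg, map_one]
      ring
    rw [h2]
    exact pbezout four_ne
  · -- u symplectic
    intro a c
    rw [hu_apply, hu_apply, hσisom, hτisom]
  · -- σ symplectic
    intro a c
    rw [hσe]
    simp only [LinearEquiv.ofLinear_apply]
    exact hσisom a c
  · -- τ symplectic
    intro a c
    rw [hτe]
    simp only [LinearEquiv.ofLinear_apply]
    exact hτisom a c
  · -- σ involution
    intro t
    rw [hσe]
    simp only [LinearEquiv.ofLinear_apply]
    exact hσinv t
  · -- τ involution
    intro t
    rw [hτe]
    simp only [LinearEquiv.ofLinear_apply]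
    exact hτinv t
  · -- u = σ ∘ τ
    intro t
    rw [hu_apply, hσe, hτe]
    simp only [LinearEquiv.ofLinear_apply]
  · -- the pairing identity
    have hB : (LinearMap.compl₁₂ s L.subtype
          ((σm ∘ₗ τm) ∘ₗ L.subtype) : L →ₗ[F] L →ₗ[F] F)
        = b.compl₂ (v : L →ₗ[F] L) := by
      refine ε.ext fun i => ?_
      refine ε.ext fun j => ?_
      rw [LinearMap.compl₁₂_apply, LinearMap.compl₂_apply]
      simp only [LinearMap.comp_apply, Submodule.subtype_apply]
      rw [swapσ]
      exact key i j
    intro xl yl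
    have h1 := congrArg (fun B => B xl yl) hB
    simp only [LinearMap.compl₁₂_apply, LinearMap.compl₂_apply,
      LinearMap.comp_apply, Submodule.subtype_apply] at h1
    rw [hu_apply]
    rw [show ((v : L →ₗ[F] L) yl : L) = v yl from rfl] at h1
    exact h1
end

section
/- Let F be a field of characteristic not 2, V a 4-dimensional F-vector space with a symplectic form s, and u ∈ Sp(s). If u is a product of three involutions of Sp(s) but is not a product of two involutions of Sp(s), then the trace of u (as a linear endomorphism of V) equals 0. -/
/-!
Write `u = a b c` with symplectic involutions `a, b, c`. As `u` is not a product of two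
involutions, `c ≠ ±1`; the two eigenspaces of `c` are nondegenerate, hence both planes, and
`tr c = 0`. Being a symplectic involution, `a` is self-adjoint for `s`, so `B(x, y) = s(a x, y)` is
again symplectic and `w = a b` is `B`-self-adjoint. For such an operator every cyclic subspace
`span {x, w x, w² x}` is isotropic, and in dimension 4 this forces a quadratic relation
`w² = α w + β`. Then `β • b a = w - α`, and `tr u = tr u⁻¹ = tr (b a c)` yields
`tr u = β tr u`. Finally `β = 1` would force `α = 0`, so `w² = 1` and `u = w c` would be a
product of two involutions.
-/

open Module LinearMap Submodule

section

variable {F V : Type*} [Field F] [AddCommGroup V] [Module F V]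

theorem finrank_span_pair {x y : V} (h : LinearIndependent F ![x, y]) :
    finrank F (span F {x, y}) = 2 := by
  rw [← Matrix.range_cons_cons_empty, finrank_span_eq_card h, Fintype.card_fin]

namespace Module.End

theorem exists_eigenvalue_of_apply_ne_zero {w N : Module.End F V} {α β : F}
    (hN : N = w * w - α • w - β • 1) {u : V} (hwu : w (w u) ∈ span F {u, w u})
    (hu : N u ≠ 0) (hNN : N (N u) = 0) :
    ∃ κ ν : F, β = κ * κ - α * κ ∧ (2 * κ - α) * ν = 1 ∧
      w u = ν • N u + κ • u ∧ w (N u) = κ • N u := by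
  have hN' : ∀ x, N x = w (w x) - α • w x - β • x := fun x => by rw [hN]; rfl
  have hNw : ∀ x, N (w x) = w (N x) := fun x => by simp only [hN', map_sub, map_smul]
  have hNu : N u ∉ F ∙ u := fun h => by
    obtain ⟨k, hk⟩ := mem_span_singleton.mp h
    have : k • N u = 0 := by rw [← hNN, ← hk, map_smul, hk]
    rw [(smul_eq_zero.mp this).resolve_right hu, zero_smul] at hk
    exact hu hk.symm
  have hNu_mem : N u ∈ span F (insert (w u) {u}) := by
    rw [Set.pair_comm] at hwu
    rw [hN']
    exact sub_mem (sub_mem hwu (smul_mem _ _ (subset_span (by simp))))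
      (smul_mem _ _ (subset_span (by simp)))
  obtain ⟨ν, κ, hwu'⟩ := mem_span_pair.mp (mem_span_insert_exchange hNu_mem hNu)
  have hwN : w (N u) = κ • N u := by
    rw [← hNw, ← hwu', map_add, map_smul, map_smul, hNN, smul_zero, zero_add]
  have hκ : (κ * κ - α * κ - β) • N u = 0 := by
    rw [← hNN, hN' (N u), hwN, map_smul, hwN]; module
  obtain rfl : β = κ * κ - α * κ := by
    linear_combination -(smul_eq_zero.mp hκ).resolve_right hu
  refine ⟨κ, ν, rfl, ?_, hwu'.symm, hwN⟩
  have hwwu : w (w u) = (2 * κ * ν) • N u + (κ * κ) • u := by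
    rw [← hwu', map_add, map_smul, map_smul, hwN, ← hwu']; module
  have : ((2 * κ - α) * ν - 1) • N u = 0 := by
    have h := hN' u
    rw [hwwu, ← hwu'] at h
    linear_combination (norm := module) -h
  linear_combination (smul_eq_zero.mp this).resolve_right hu

end Module.End

namespace LinearMap.BilinForm

variable {B : LinearMap.BilinForm F V}

theorem isAdjointPair_of_isOrthogonal {f g : Module.End F V} (hf : B.IsOrthogonal f)
    (hfg : f * g = 1) : IsAdjointPair B B f g := fun x y => by
  rw [← hf x (g y), ← Module.End.mul_apply, hfg, Module.End.one_apply]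

def IsOrthogonalInvolution (B : LinearMap.BilinForm F V) (f : Module.End F V) : Prop :=
  B.IsOrthogonal f ∧ f * f = 1

theorem IsOrthogonalInvolution.isSelfAdjoint {f : Module.End F V}
    (hf : B.IsOrthogonalInvolution f) : B.IsSelfAdjoint f :=
  isAdjointPair_of_isOrthogonal hf.1 hf.2

theorem IsOrthogonalInvolution.neg {f : Module.End F V} (hf : B.IsOrthogonalInvolution f) :
    B.IsOrthogonalInvolution (-f) :=
  ⟨fun x y => by simpa using hf.1 x y, by rw [neg_mul_neg, hf.2]⟩

theorem trace_eq_of_isAdjointPair [FiniteDimensional F V] (hB : B.Nondegenerate)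
    {f g : Module.End F V} (h : IsAdjointPair B B f g) : trace F V f = trace F V g := by
  have hconj : (B.toDual hB).conj f = Dual.transpose (R := F) g := by
    ext φ y
    obtain ⟨z, rfl⟩ := (B.toDual hB).surjective φ
    simp [LinearEquiv.conj_apply, toDual_def, h z y, Dual.transpose_apply]
  rw [← trace_conj' f (B.toDual hB), hconj, trace_transpose']

theorem trace_eq_of_isOrthogonal [FiniteDimensional F V] (hB : B.Nondegenerate)
    {f g : Module.End F V} (hf : B.IsOrthogonal f) (hfg : f * g = 1) :
    trace F V g = trace F V f :=
  (trace_eq_of_isAdjointPair hB (isAdjointPair_of_isOrthogonal hf hfg)).symm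

theorem apply_apply_self_eq_zero (hB : B.IsAlt) (h2 : (2 : F) ≠ 0) {w : Module.End F V}
    (hw : B.IsSelfAdjoint w) (x : V) : B (w x) x = 0 := by
  have h : B (w x) x = - B (w x) x := by rw [LinearMap.IsAlt.neg hB, hw x x]
  exact (mul_eq_zero.mp (by linear_combination h : (2 : F) * B (w x) x = 0)).resolve_left h2

theorem isAlt_comp (hB : B.IsAlt) (h2 : (2 : F) ≠ 0) {a : Module.End F V}
    (ha : B.IsSelfAdjoint a) : (B ∘ₗ a).IsAlt :=
  apply_apply_self_eq_zero hB h2 ha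

theorem nondegenerate_comp (hB : B.Nondegenerate) (hBalt : B.IsAlt) (h2 : (2 : F) ≠ 0)
    {a : Module.End F V} (ha : B.IsSelfAdjoint a) (ha2 : a * a = 1) :
    (B ∘ₗ a).Nondegenerate := by
  refine (isAlt_comp hBalt h2 ha).isRefl.nondegenerate_iff_separatingLeft.mpr fun x hx => ?_
  have hx' : a (a x) = x := LinearMap.congr_fun ha2 x
  rw [← hx', hB.1 (a x) hx, map_zero]

theorem isSelfAdjoint_comp_mul {a b : Module.End F V} (ha : B.IsOrthogonal a) (ha2 : a * a = 1)
    (hb : B.IsSelfAdjoint b) : (B ∘ₗ a).IsSelfAdjoint (a * b) := fun x y => by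
  simp only [LinearMap.comp_apply, Module.End.mul_apply]
  rw [← Module.End.mul_apply a a, ha2, Module.End.one_apply, hb, ← ha x]

theorem orthogonal_eq_self [FiniteDimensional F V] (hB : B.Nondegenerate) {W : Submodule F V}
    (hW : W ≤ B.orthogonal W) (hdim : 2 * finrank F W = finrank F V) : B.orthogonal W = W :=
  (eq_of_le_of_finrank_le hW (by rw [finrank_orthogonal hB]; omega)).symm

theorem apply_mem_of_orthogonal_eq_self {W : Submodule F V} (hW : B.orthogonal W = W)
    {N : Module.End F V} (hN : B.IsSelfAdjoint N) (hNW : ∀ x ∈ W, N x = 0) (x : V) :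
    N x ∈ W :=
  hW ▸ fun n hn => by rw [← hN, hNW n hn, map_zero, LinearMap.zero_apply]

theorem span_pair_le_orthogonal (hB : B.IsAlt) (h2 : (2 : F) ≠ 0) {w : Module.End F V}
    (hw : B.IsSelfAdjoint w) (v : V) :
    span F {v, w v} ≤ B.orthogonal (span F {v, w v}) := by
  have h₁ : B (w v) v = 0 := apply_apply_self_eq_zero hB h2 hw v
  have h₂ : B v (w v) = 0 := (hw v v).symm.trans h₁
  rw [span_le]
  rintro m hm n hn
  obtain ⟨a, b, rfl⟩ := mem_span_pair.mp hn
  rcases hm with rfl | rfl <;> simp [hB.self_eq_zero, h₁, h₂]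

theorem orthogonal_span_pair_eq [FiniteDimensional F V] (hB : B.Nondegenerate) (hBalt : B.IsAlt)
    (h2 : (2 : F) ≠ 0) (hdim : finrank F V = 4) {w : Module.End F V} (hw : B.IsSelfAdjoint w)
    {v : V} (hv : LinearIndependent F ![v, w v]) :
    B.orthogonal (span F {v, w v}) = span F {v, w v} := by
  refine orthogonal_eq_self hB (span_pair_le_orthogonal hBalt h2 hw v) ?_
  rw [finrank_span_pair hv, hdim]

theorem apply_apply_mem_span_pair [FiniteDimensional F V] (hB : B.Nondegenerate)
    (hBalt : B.IsAlt) (h2 : (2 : F) ≠ 0) (hdim : finrank F V = 4) {w : Module.End F V}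
    (hw : B.IsSelfAdjoint w) (v : V) : w (w v) ∈ span F {v, w v} := by
  by_cases hv : LinearIndependent F ![v, w v]
  · rw [← orthogonal_span_pair_eq hB hBalt h2 hdim hw hv]
    intro n hn
    obtain ⟨a, b, rfl⟩ := mem_span_pair.mp hn
    have h₁ : B v (w (w v)) = 0 := by rw [← hw, hBalt.self_eq_zero]
    have h₂ : B (w v) (w (w v)) = 0 := by rw [← hw, apply_apply_self_eq_zero hBalt h2 hw]
    simp [h₁, h₂]
  · rcases eq_or_ne v 0 with rfl | hv0
    · simp
    obtain ⟨a, ha⟩ : ∃ a : F, a • v = w v := by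
      simpa [LinearIndependent.pair_iff' hv0] using hv
    rw [← ha, map_smul, ha]
    exact smul_mem _ _ (subset_span (by simp))

theorem mem_of_orthogonal_eq_self_of_eigenvectors [FiniteDimensional F V] {w : Module.End F V}
    (hw : B.IsSelfAdjoint w) {W : Submodule F V} (hW : B.orthogonal W = W)
    (hW2 : finrank F W = 2) {z r u : V} {κ μ ν : F} (hz : z ∈ W) (hr : r ∈ W) (hz0 : z ≠ 0)
    (hr0 : r ≠ 0) (hκμ : μ - κ ≠ 0) (hwz : w z = κ • z) (hwr : w r = μ • r)
    (hwu : w u = ν • z + κ • u) (hzu : B z u = 0) : u ∈ W := by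
  have hzr : LinearIndependent F ![z, r] := (LinearIndependent.pair_iff' hz0).mpr fun k hk => by
    have hκr : w r = κ • r := by rw [← hk, map_smul, hwz, smul_comm]
    have : (μ - κ) • r = 0 := by linear_combination (norm := module) hwr.symm.trans hκr
    exact hr0 ((smul_eq_zero.mp this).resolve_left hκμ)
  have hspan : span F {z, r} = W :=
    eq_of_le_of_finrank_le (span_le.mpr (Set.pair_subset hz hr))
      (by rw [finrank_span_pair hzr, hW2])
  have hru : B r u = 0 := by
    have hrz : B r z = 0 := (by rwa [hW] : z ∈ B.orthogonal W) r hr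
    have h : μ * B r u = ν * B r z + κ * B r u := by
      rw [← smul_eq_mul, ← LinearMap.smul_apply, ← map_smul, ← hwr, hw, hwu]; simp
    have : (μ - κ) * B r u = 0 := by rw [hrz] at h; linear_combination h
    exact (mul_eq_zero.mp this).resolve_left hκμ
  rw [← hW, ← hspan]
  intro n hn
  obtain ⟨a, b, rfl⟩ := mem_span_pair.mp hn
  simp [hzu, hru]

/- `N = w² - α w - β` kills the Lagrangian `W = span {v, w v}` and maps `V` into `W`. If
`N u ≠ 0`, then `W` is spanned by eigenvectors `N u` and `w v - κ v` of `w` for the two distinct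
roots `κ`, `α - κ`, and both are orthogonal to `u`, forcing `u ∈ W^⊥ = W`. -/
theorem mul_self_eq_of_apply_apply_eq [FiniteDimensional F V] (hB : B.Nondegenerate)
    (hBalt : B.IsAlt) (h2 : (2 : F) ≠ 0) (hdim : finrank F V = 4) {w : Module.End F V}
    (hw : B.IsSelfAdjoint w) {v : V} (hv : LinearIndependent F ![v, w v]) {α β : F}
    (hαβ : w (w v) = α • w v + β • v) : w * w = α • w + β • 1 := by
  set N : Module.End F V := w * w - α • w - β • 1 with hN
  have hN' : ∀ x, N x = w (w x) - α • w x - β • x := fun x => rfl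
  set W := span F {v, w v}
  have hW : B.orthogonal W = W := orthogonal_span_pair_eq hB hBalt h2 hdim hw hv
  have hNB : B.IsSelfAdjoint N := ((hw.mul hw).sub (hw.smul α)).sub (isAdjointPair_one.smul β)
  have hNv : N v = 0 := by rw [hN', hαβ]; abel
  have hNW : ∀ x ∈ W, N x = 0 := fun x hx => by
    obtain ⟨a, b, rfl⟩ := mem_span_pair.mp hx
    have : N (w v) = w (N v) := by simp only [hN', map_sub, map_smul]
    simp [this, hNv]
  have hNmem := apply_mem_of_orthogonal_eq_self hW hNB hNW
  rw [← sub_eq_zero, ← sub_sub]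
  ext u
  rw [LinearMap.zero_apply]
  by_contra hu
  obtain ⟨κ, ν, rfl, hν, hwu, hwz⟩ := Module.End.exists_eigenvalue_of_apply_ne_zero hN
    (apply_apply_mem_span_pair hB hBalt h2 hdim hw u) hu (hNW _ (hNmem u))
  have hκ : α - κ - κ ≠ 0 := fun h =>
    one_ne_zero (hν.symm.trans (by linear_combination -ν * h))
  have hwr : w (w v - κ • v) = (α - κ) • (w v - κ • v) := by
    simp only [map_sub, map_smul, hαβ]; module
  have hr0 : w v - κ • v ≠ 0 := fun h => by
    have := LinearIndependent.pair_iff.mp hv (-κ) 1 (by rw [← h]; module)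
    exact one_ne_zero this.2
  have hrW : w v - κ • v ∈ W :=
    sub_mem (subset_span (by simp)) (smul_mem _ _ (subset_span (by simp)))
  exact hu (hNW u (mem_of_orthogonal_eq_self_of_eigenvectors hw hW (finrank_span_pair hv)
    (hNmem u) hrW hu hr0 hκ hwz hwr hwu (apply_apply_self_eq_zero hBalt h2 hNB u)))

theorem exists_mul_self_eq_smul_add_smul [FiniteDimensional F V] (hB : B.Nondegenerate)
    (hBalt : B.IsAlt) (h2 : (2 : F) ≠ 0) (hdim : finrank F V = 4) {w : Module.End F V}
    (hw : B.IsSelfAdjoint w) : ∃ α β : F, w * w = α • w + β • 1 := by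
  by_cases h : ∃ v, LinearIndependent F ![v, w v]
  · obtain ⟨v, hv⟩ := h
    obtain ⟨β, α, hαβ⟩ := mem_span_pair.mp (apply_apply_mem_span_pair hB hBalt h2 hdim hw v)
    exact ⟨α, β,
      mul_self_eq_of_apply_apply_eq hB hBalt h2 hdim hw hv (by rw [← hαβ, add_comm])⟩
  · obtain ⟨a, rfl⟩ :=
      LinearMap.exists_eq_smul_id_of_forall_notLinearIndependent (not_exists.mp h)
    exact ⟨a, 0, by rw [smul_mul_smul_comm, one_mul, zero_smul, add_zero, smul_smul]⟩

theorem finrank_range_ne_one (hB : B.Nondegenerate) (hBalt : B.IsAlt) {P : Module.End F V}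
    (hP : IsIdempotentElem P) (hPB : B.IsSelfAdjoint P) : finrank F (range P) ≠ 1 := by
  intro h
  obtain ⟨⟨z, hz⟩, hz0, hspan⟩ := finrank_eq_one_iff'.mp h
  refine hz0 (Subtype.ext (hB.1 z fun y => ?_))
  obtain ⟨k, hk⟩ := hspan ⟨P y, mem_range_self P y⟩
  have hPy : P y = k • z := (congrArg Subtype.val hk).symm
  rw [← hP.mem_range_iff.mp hz, hPB, hPy, map_smul, hBalt.self_eq_zero, smul_zero]

theorem trace_eq_zero_of_mul_self_eq_one [FiniteDimensional F V] (hB : B.Nondegenerate)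
    (hBalt : B.IsAlt) (h2 : (2 : F) ≠ 0) (hdim : finrank F V = 4) {c : Module.End F V}
    (hc : B.IsSelfAdjoint c) (hc2 : c * c = 1) (hc1 : c ≠ 1) (hcm : c ≠ -1) :
    trace F V c = 0 := by
  set P : Module.End F V := (2 : F)⁻¹ • (1 + c)
  have hP : IsIdempotentElem P := by
    have : (1 + c) * (1 + c) = (2 : F) • (1 + c) := by
      rw [mul_add, add_mul, add_mul, hc2, one_mul, mul_one]; module
    rw [IsIdempotentElem, smul_mul_smul_comm, this, smul_smul, inv_mul_cancel_right₀ h2]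
  have hPB : B.IsSelfAdjoint P := (isAdjointPair_one.add hc).smul _
  have hc' : c = (2 : F) • P - 1 := by
    rw [smul_smul, mul_inv_cancel₀ h2, one_smul, add_sub_cancel_left]
  have hrank := finrank_range_add_finrank_ker P
  rw [hP.ker_eq_range_one_sub] at hrank
  have h₁ := finrank_range_ne_one hB hBalt hP hPB
  have h₂ := finrank_range_ne_one hB hBalt hP.one_sub (isAdjointPair_one.sub hPB)
  have h₃ : finrank F (range P) ≠ 0 := fun h => hcm <| by
    rw [Submodule.finrank_eq_zero, range_eq_bot] at h
    rw [hc', h, smul_zero, zero_sub]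
  have h₄ : finrank F (range (1 - P)) ≠ 0 := fun h => hc1 <| by
    rw [Submodule.finrank_eq_zero, range_eq_bot, sub_eq_zero] at h
    rw [hc', ← h, two_smul, add_sub_cancel_right]
  rw [hc', map_sub, map_smul, hP.isProj_range.trace, trace_one, hdim,
    show finrank F (range P) = 2 by omega]
  norm_num

theorem trace_mul_mul_eq_zero [FiniteDimensional F V] (hB : B.Nondegenerate)
    (hV : (finrank F V : F) ≠ 0) {a b c : Module.End F V} (habc : B.IsOrthogonal (a * b * c))
    (ha : a * a = 1) (hb : b * b = 1) (hc : c * c = 1) (htc : trace F V c = 0) {α β : F}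
    (hw : a * b * (a * b) = α • (a * b) + β • 1) (hw1 : a * b * (a * b) ≠ 1) :
    trace F V (a * b * c) = 0 := by
  have hab : a * b * (b * a) = 1 := by rw [mul_assoc, ← mul_assoc b, hb, one_mul, ha]
  have hba : β • (b * a) = a * b - α • 1 := calc
    β • (b * a) = (a * b * (a * b) - α • (a * b)) * (b * a) := by
      rw [hw, add_sub_cancel_left, smul_mul_assoc, one_mul]
    _ = a * b - α • 1 := by
      rw [sub_mul, mul_assoc, hab, mul_one, smul_mul_assoc, hab]
  have hinv : a * b * c * (c * b * a) = 1 := by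
    rw [mul_assoc, ← mul_assoc c, ← mul_assoc c, hc, one_mul, hab]
  have h₁ : trace F V (a * b * c) = trace F V (b * a * c) := by
    rw [← trace_eq_of_isOrthogonal hB habc hinv, trace_mul_cycle F b a c]
  have h₂ : β * trace F V (b * a * c) = trace F V (a * b * c) := by
    rw [← smul_eq_mul, ← map_smul, ← smul_mul_assoc, hba, sub_mul, map_sub, smul_mul_assoc,
      one_mul, map_smul, htc, smul_zero, sub_zero]
  have hβ : β ≠ 1 := by
    rintro rfl
    refine hw1 ?_
    have hα : α * finrank F V = 0 := by
      have := congrArg (trace F V) hba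
      rw [one_smul, trace_mul_comm, map_sub, map_smul, trace_one, smul_eq_mul] at this
      linear_combination this
    rw [hw, (mul_eq_zero.mp hα).resolve_right hV, zero_smul, zero_add, one_smul]
  have : (β - 1) * trace F V (a * b * c) = 0 := by linear_combination β * h₁ + h₂
  exact (mul_eq_zero.mp this).resolve_left (sub_ne_zero.mpr hβ)

theorem trace_mul_mul_eq_zero_of_forall_ne_mul [FiniteDimensional F V] (hB : B.Nondegenerate)
    (hBalt : B.IsAlt) (h2 : (2 : F) ≠ 0) (hdim : finrank F V = 4) {a b c : Module.End F V}
    (ha : B.IsOrthogonalInvolution a) (hb : B.IsOrthogonalInvolution b)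
    (hc : B.IsOrthogonalInvolution c)
    (habc : ∀ f g, B.IsOrthogonalInvolution f → B.IsOrthogonalInvolution g →
      a * b * c ≠ f * g) :
    trace F V (a * b * c) = 0 := by
  have hab : B.IsOrthogonal (a * b) := fun x y => (ha.1 _ _).trans (hb.1 x y)
  have hc1 : c ≠ 1 := fun h => habc a b ha hb (by rw [h, mul_one])
  have hcm1 : c ≠ -1 := fun h => habc a (-b) ha hb.neg (by rw [h, mul_neg_one, mul_neg])
  have hab1 : a * b * (a * b) ≠ 1 := fun h => habc (a * b) c ⟨hab, h⟩ hc rfl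
  obtain ⟨α, β, hw⟩ := exists_mul_self_eq_smul_add_smul
    (nondegenerate_comp hB hBalt h2 ha.isSelfAdjoint ha.2) (isAlt_comp hBalt h2 ha.isSelfAdjoint)
    h2 hdim (isSelfAdjoint_comp_mul ha.1 ha.2 hb.isSelfAdjoint)
  have h4 : (finrank F V : F) ≠ 0 := by
    rw [hdim, show ((4 : ℕ) : F) = 2 * 2 by norm_num]
    exact mul_ne_zero h2 h2
  exact trace_mul_mul_eq_zero hB h4 (fun x y => (hab _ _).trans (hc.1 x y)) ha.2 hb.2 hc.2
    (trace_eq_zero_of_mul_self_eq_one hB hBalt h2 hdim hc.isSelfAdjoint hc.2 hc1 hcm1) hw hab1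

end LinearMap.BilinForm

theorem exists_linearEquiv_of_eq_mul {s : LinearMap.BilinForm F V} {u f g : Module.End F V}
    (hf : s.IsOrthogonalInvolution f) (hg : s.IsOrthogonalInvolution g) (hu : u = f * g) :
    ∃ i j : V ≃ₗ[F] V, (∀ x y, s (i x) (i y) = s x y) ∧
      (∀ x y, s (j x) (j y) = s x y) ∧ (∀ x, i (i x) = x) ∧ (∀ x, j (j x) = x) ∧
      (∀ x, u x = i (j x)) := by
  have hf' : Function.Involutive f := LinearMap.congr_fun hf.2
  have hg' : Function.Involutive g := LinearMap.congr_fun hg.2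
  exact ⟨.ofInvolutive f hf', .ofInvolutive g hg', hf.1, hg.1, hf', hg',
    fun x => by rw [hu]; rfl⟩

end

theorem trace_trick_general
    (F : Type*) [Field F] (hF : ringChar F ≠ 2)
    (V : Type*) [AddCommGroup V] [Module F V] [FiniteDimensional F V]
    (hdim : Module.finrank F V = 4)
    (s : V →ₗ[F] V →ₗ[F] F)
    (halt : ∀ x, s x x = 0)
    (hnd : ∀ x, (∀ y, s x y = 0) → x = 0)
    (u : V ≃ₗ[F] V)
    (h3 : ∃ i₁ i₂ i₃ : V ≃ₗ[F] V,
      (∀ x y, s (i₁ x) (i₁ y) = s x y) ∧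
      (∀ x y, s (i₂ x) (i₂ y) = s x y) ∧
      (∀ x y, s (i₃ x) (i₃ y) = s x y) ∧
      (∀ x, i₁ (i₁ x) = x) ∧ (∀ x, i₂ (i₂ x) = x) ∧ (∀ x, i₃ (i₃ x) = x) ∧
      (∀ x, u x = i₁ (i₂ (i₃ x))))
    (h2 : ¬ ∃ i j : V ≃ₗ[F] V,
      (∀ x y, s (i x) (i y) = s x y) ∧
      (∀ x y, s (j x) (j y) = s x y) ∧
      (∀ x, i (i x) = x) ∧ (∀ x, j (j x) = x) ∧
      (∀ x, u x = i (j x))) :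
    LinearMap.trace F V (u : V →ₗ[F] V) = 0 := by
  obtain ⟨i₁, i₂, i₃, h₁, h₂, h₃, h₁₁, h₂₂, h₃₃, hu⟩ := h3
  have hu' : (u : Module.End F V) = (i₁ : Module.End F V) * i₂ * i₃ := LinearMap.ext hu
  have hs : s.Nondegenerate :=
    (LinearMap.IsAlt.isRefl halt).nondegenerate_iff_separatingLeft.mpr hnd
  rw [hu']
  refine LinearMap.BilinForm.trace_mul_mul_eq_zero_of_forall_ne_mul hs halt
    (Ring.two_ne_zero hF) hdim ⟨h₁, LinearMap.ext h₁₁⟩ ⟨h₂, LinearMap.ext h₂₂⟩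
    ⟨h₃, LinearMap.ext h₃₃⟩ ?_
  intro f g hf hg hfg
  exact h2 (exists_linearEquiv_of_eq_mul hf hg (hu'.trans hfg))

/-- The Trace Trick. Let `(V, s)` be a 4-dimensional symplectic space over a field `F`
of characteristic not 2 and `u ∈ Sp(s)`. If `u` is a product of three involutions of
`Sp(s)` but not a product of two involutions of `Sp(s)`, then `tr u = 0`. -/
theorem trace_trick
    (F : Type*) [Field F] (hF : ringChar F ≠ 2)
    (V : Type*) [AddCommGroup V] [Module F V] [FiniteDimensional F V]
    (hdim : Module.finrank F V = 4)
    (s : V →ₗ[F] V →ₗ[F] F)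
    (halt : ∀ x, s x x = 0)
    (hnd : ∀ x, (∀ y, s x y = 0) → x = 0)
    (u : V ≃ₗ[F] V)
    (hu : ∀ x y, s (u x) (u y) = s x y)
    (h3 : ∃ i₁ i₂ i₃ : V ≃ₗ[F] V,
      (∀ x y, s (i₁ x) (i₁ y) = s x y) ∧
      (∀ x y, s (i₂ x) (i₂ y) = s x y) ∧
      (∀ x y, s (i₃ x) (i₃ y) = s x y) ∧
      (∀ x, i₁ (i₁ x) = x) ∧ (∀ x, i₂ (i₂ x) = x) ∧ (∀ x, i₃ (i₃ x) = x) ∧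
      (∀ x, u x = i₁ (i₂ (i₃ x))))
    (h2 : ¬ ∃ i j : V ≃ₗ[F] V,
      (∀ x y, s (i x) (i y) = s x y) ∧
      (∀ x y, s (j x) (j y) = s x y) ∧
      (∀ x, i (i x) = x) ∧ (∀ x, j (j x) = x) ∧
      (∀ x, u x = i (j x))) :
    LinearMap.trace F V (u : V →ₗ[F] V) = 0 :=
  trace_trick_general F hF V hdim s halt hnd u h3 h2
end
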